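/- arXiv:2209.04654 — 6 statements merged into one kernel-verified Lean document; each statement's English description precedes it below -/
import Mathlib

section
/- Let K = (E, I, c, p, β) be a BMI instance, let 0 < ε < 1/2, and let R ⊆ E be a representative set of K and ε. Then there exists a solution S of K such that (1) S ∩ H ⊆ R and (2) p(S) ≥ (1 − 3ε)·OPT(K). -/
open Finset
open scoped Classical

/-- A budgeted matroid independent set (BMI) instance: a matroid `(E, Indep)` on a
finite ground set in which every singleton is independent, a budget `budget > 0`,
a cost function `cost : E → [0, budget]`, and a nonnegative profit function
`profit`. -/
structure BMI (E : Type) [Fintype E] [DecidableEq E] where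
  Indep : Finset E → Prop
  indep_empty : Indep ∅
  indep_subset : ∀ ⦃A B : Finset E⦄, Indep A → B ⊆ A → Indep B
  indep_exchange : ∀ ⦃A B : Finset E⦄, Indep A → Indep B → B.card < A.card →
    ∃ e ∈ A \ B, Indep (insert e B)
  indep_singleton : ∀ e : E, Indep {e}
  budget : ℝ
  budget_pos : 0 < budget
  cost : E → ℝ
  cost_nonneg : ∀ e, 0 ≤ cost e
  cost_le_budget : ∀ e, cost e ≤ budget
  profit : E → ℝ
  profit_nonneg : ∀ e, 0 ≤ profit e

variable {E : Type} [Fintype E] [DecidableEq E]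

/-- A solution of a BMI instance: an independent set of total cost at most the budget. -/
def BMI.IsSolution (K : BMI E) (X : Finset E) : Prop :=
  K.Indep X ∧ ∑ e ∈ X, K.cost e ≤ K.budget

/-- `OPT(K)`: the maximal profit of a solution of `K`. -/
noncomputable def BMI.opt (K : BMI E) : ℝ :=
  sSup {v : ℝ | ∃ X : Finset E, K.IsSolution X ∧ v = ∑ e ∈ X, K.profit e}

/-- `q(ε) = ε^{-1/ε}` (a real power). -/
noncomputable def qe (ε : ℝ) : ℝ := ε ^ (-(1/ε))

/-- The set `H` of profitable elements: those with `p(e) > ε·OPT(K)`. -/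
noncomputable def BMI.H (K : BMI E) (ε : ℝ) : Finset E :=
  univ.filter (fun e => ε * K.opt < K.profit e)

/-- `A ∈ I_{≤ q(ε)}`: `A` is independent and `|A| ≤ q(ε)`. -/
def BMI.IndepLe (K : BMI E) (ε : ℝ) (A : Finset E) : Prop :=
  K.Indep A ∧ (A.card : ℝ) ≤ qe ε

/-- `Z` is a replacement of `G` for `K` and `ε`. -/
noncomputable def BMI.IsReplacement (K : BMI E) (ε : ℝ) (G Z : Finset E) : Prop :=
  K.IndepLe ε ((G \ K.H ε) ∪ Z) ∧
  ∑ e ∈ Z, K.cost e ≤ ∑ e ∈ G ∩ K.H ε, K.cost e ∧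
  (1 - ε) * ∑ e ∈ G, K.profit e ≤ ∑ e ∈ (G \ K.H ε) ∪ Z, K.profit e ∧
  Z.card ≤ (G ∩ K.H ε).card

/-- `R` is a representative set of `K` and `ε`: every `G ∈ I_{≤ q(ε)}` has a
replacement contained in `R`. -/
noncomputable def BMI.IsRepresentative (K : BMI E) (ε : ℝ) (R : Finset E) : Prop :=
  ∀ G : Finset E, K.IndepLe ε G → ∃ Z ⊆ R, K.IsReplacement ε G Z

/-!
Take an optimal solution `T` and let `G` be its elements of profit above `ε²·OPT`; there are at
most `ε⁻² ≤ q(ε)` of them, so `G` has a replacement `Z ⊆ R`. Augmenting the independent set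
`(G \ H) ∪ Z` from `T \ H` gives an independent set `S ⊆ Z ∪ (T \ H)`, which fits in the budget
because `c(Z) ≤ c(T ∩ H)`. The replacement loses `ε·p(G)`, and the augmentation step can lose
at most `|Z| ≤ |T ∩ H| ≤ ε⁻¹` elements of `T \ G` twice over, each of profit at most `ε²·OPT`.
-/

theorem inv_sq_le_qe {ε : ℝ} (hε : 0 < ε) (hε2 : ε ≤ 1 / 2) : (ε ^ 2)⁻¹ ≤ qe ε := by
  have hexp : -(1 / ε) ≤ -2 := by
    rw [neg_le_neg_iff, le_div_iff₀ hε]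
    linarith
  calc (ε ^ 2)⁻¹ = ε ^ (-2 : ℝ) := by rw [Real.rpow_neg hε.le, Real.rpow_two]
    _ ≤ qe ε := Real.rpow_le_rpow_of_exponent_ge hε (by linarith) hexp

/-- The loss is carried by two sets of at most `|Z|` elements of `F \ D`: those left out of `S`
(as `|F| ≤ |S|`) and those counted in both sums on the left. -/
theorem sum_sdiff_add_sum_union_le {α : Type*} [DecidableEq α] {p : α → ℝ}
    {D F Z S : Finset α} {δ : ℝ} (hδ : 0 ≤ δ)
    (hsmall : ∀ e ∈ F \ D, p e ≤ δ) (hDF : D ⊆ F) (hDS : D ⊆ S) (hZS : Z ⊆ S)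
    (hSZF : S ⊆ Z ∪ F) (hFS : #F ≤ #S) :
    ∑ e ∈ F \ D, p e + ∑ e ∈ D ∪ Z, p e ≤ ∑ e ∈ S, p e + 2 * (#Z * δ) := by
  have small : ∀ W ⊆ F \ D, #W ≤ #Z → ∑ e ∈ W, p e ≤ #Z * δ := fun W hW hWZ =>
    calc ∑ e ∈ W, p e ≤ #W • δ := sum_le_card_nsmul _ _ _ fun e he => hsmall e (hW he)
      _ = #W * δ := nsmul_eq_mul _ _
      _ ≤ #Z * δ := by gcongr
  have hoverlap : ∑ e ∈ (F \ D) ∩ (D ∪ Z), p e ≤ #Z * δ := by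
    refine small _ inter_subset_left (card_le_card fun e he => ?_)
    simp only [mem_inter, mem_sdiff, mem_union] at he
    tauto
  have hmissed : ∑ e ∈ F \ S, p e ≤ #Z * δ := by
    refine small _ (sdiff_subset_sdiff subset_rfl hDS) ?_
    have : #(S \ F) ≤ #Z := card_le_card fun e he => by
      have := hSZF (mem_sdiff.1 he).1
      simp only [mem_union, mem_sdiff] at this he
      tauto
    have := card_sdiff_add_card_inter F S
    have := card_sdiff_add_card_inter S F
    rw [inter_comm] at this
    omega
  have hunion : (F \ D) ∪ (D ∪ Z) = S ∪ (F \ S) := by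
    rw [union_sdiff_self_eq_union]
    ext e
    have := @hDF e; have := @hZS e; have := @hSZF e
    simp only [mem_union, mem_sdiff] at *
    tauto
  have key := sum_union_inter (s₁ := F \ D) (s₂ := D ∪ Z) (f := p)
  rw [hunion, sum_union disjoint_sdiff] at key
  linarith

namespace BMI

variable {K : BMI E}

@[simp]
theorem mem_H {ε : ℝ} {e : E} : e ∈ K.H ε ↔ ε * K.opt < K.profit e := by
  simp [BMI.H]

theorem Indep.augment {A B : Finset E} (hA : K.Indep A) (hB : K.Indep B) :
    ∃ C, A ⊆ C ∧ C ⊆ A ∪ B ∧ K.Indep C ∧ #B ≤ #C := by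
  induction h : #B - #A generalizing A with
  | zero => exact ⟨A, subset_rfl, subset_union_left, hA, by omega⟩
  | succ n ih =>
    obtain ⟨e, he, heA⟩ := K.indep_exchange hB hA (by omega)
    rw [mem_sdiff] at he
    obtain ⟨C, hAC, hCAB, hC, hBC⟩ := ih heA (by rw [card_insert_of_notMem he.2]; omega)
    refine ⟨C, (subset_insert _ _).trans hAC, ?_, hC, hBC⟩
    rwa [insert_union, insert_eq_of_mem (mem_union_right _ he.1)] at hCAB

theorem isSolution_empty (K : BMI E) : K.IsSolution ∅ :=
  ⟨K.indep_empty, by simpa using K.budget_pos.le⟩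

theorem finite_solutionProfits (K : BMI E) :
    {v : ℝ | ∃ X : Finset E, K.IsSolution X ∧ v = ∑ e ∈ X, K.profit e}.Finite :=
  (Set.finite_range fun X : Finset E => ∑ e ∈ X, K.profit e).subset
    (by rintro v ⟨X, -, rfl⟩; exact ⟨X, rfl⟩)

theorem IsSolution.sum_profit_le_opt {X : Finset E} (hX : K.IsSolution X) :
    ∑ e ∈ X, K.profit e ≤ K.opt :=
  le_csSup K.finite_solutionProfits.bddAbove ⟨X, hX, rfl⟩

theorem opt_nonneg (K : BMI E) : 0 ≤ K.opt := by
  simpa using K.isSolution_empty.sum_profit_le_opt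

theorem exists_isSolution_sum_profit_eq_opt (K : BMI E) :
    ∃ T, K.IsSolution T ∧ ∑ e ∈ T, K.profit e = K.opt := by
  have hne : {v : ℝ | ∃ X : Finset E, K.IsSolution X ∧ v = ∑ e ∈ X, K.profit e}.Nonempty :=
    ⟨0, ∅, K.isSolution_empty, by simp⟩
  obtain ⟨T, hT, hTopt⟩ := hne.csSup_mem K.finite_solutionProfits
  exact ⟨T, hT, hTopt.symm⟩

theorem IsSolution.card_mul_le_opt {T X : Finset E} {t : ℝ} (hT : K.IsSolution T) (hXT : X ⊆ T)
    (ht : ∀ e ∈ X, t ≤ K.profit e) : #X * t ≤ K.opt :=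
  calc #X * t = #X • t := (nsmul_eq_mul _ _).symm
    _ ≤ ∑ e ∈ X, K.profit e := card_nsmul_le_sum _ _ _ ht
    _ ≤ ∑ e ∈ T, K.profit e := sum_le_sum_of_subset_of_nonneg hXT fun e _ _ => K.profit_nonneg e
    _ ≤ K.opt := hT.sum_profit_le_opt

theorem IsSolution.indepLe_filter_profit_gt {ε : ℝ} {T : Finset E} (hT : K.IsSolution T)
    (hε : 0 < ε) (hε2 : ε ≤ 1 / 2) (hopt : 0 < K.opt) :
    K.IndepLe ε (T.filter (ε ^ 2 * K.opt < K.profit ·)) := by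
  refine ⟨K.indep_subset hT.1 (filter_subset _ _), le_trans ?_ (inv_sq_le_qe hε hε2)⟩
  have := hT.card_mul_le_opt (t := ε ^ 2 * K.opt) (filter_subset _ _)
    fun e he => le_of_lt (mem_filter.1 he).2
  rw [← one_div, le_div_iff₀ (by positivity)]
  exact le_of_mul_le_mul_right (by rwa [one_mul, mul_assoc]) hopt

theorem IsSolution.exists_isSolution_of_isReplacement {ε δ : ℝ} {T G Z : Finset E}
    (hT : K.IsSolution T) (hGT : G ⊆ T) (hTHG : T ∩ K.H ε ⊆ G) (hZ : K.IsReplacement ε G Z)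
    (hδ : 0 ≤ δ) (hsmall : ∀ e ∈ T \ G, K.profit e ≤ δ) :
    ∃ S, K.IsSolution S ∧ S ∩ K.H ε ⊆ Z ∧
      ∑ e ∈ T, K.profit e - ε * ∑ e ∈ G, K.profit e ≤
        ∑ e ∈ S, K.profit e + 2 * (#(G ∩ K.H ε) * δ) := by
  obtain ⟨⟨hA, -⟩, hcost, hprofit, hcard⟩ := hZ
  have hDF : G \ K.H ε ⊆ T \ K.H ε := sdiff_subset_sdiff hGT subset_rfl
  have hFD : (T \ K.H ε) \ (G \ K.H ε) = T \ G := by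
    ext e
    have := @hTHG e
    simp only [mem_sdiff, mem_inter] at *
    tauto
  have hGH : G ∩ K.H ε = T ∩ K.H ε :=
    subset_antisymm (inter_subset_inter hGT subset_rfl) (subset_inter hTHG inter_subset_right)
  obtain ⟨S, hAS, hSAF, hS, hFS⟩ := hA.augment (K.indep_subset hT.1 sdiff_subset)
  have hSZF : S ⊆ Z ∪ T \ K.H ε := hSAF.trans fun e he => by
    have := @hDF e
    simp only [mem_union] at *
    tauto
  refine ⟨S, ⟨hS, ?_⟩, fun e he => ?_, ?_⟩
  · have hunion := sum_union_inter (s₁ := Z) (s₂ := T \ K.H ε) (f := K.cost)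
    have hinter : 0 ≤ ∑ e ∈ Z ∩ (T \ K.H ε), K.cost e := sum_nonneg fun e _ => K.cost_nonneg e
    have hsplit := sum_inter_add_sum_sdiff T (K.H ε) K.cost
    have hSsub : ∑ e ∈ S, K.cost e ≤ ∑ e ∈ Z ∪ T \ K.H ε, K.cost e :=
      sum_le_sum_of_subset_of_nonneg hSZF fun e _ _ => K.cost_nonneg e
    rw [hGH] at hcost
    linarith [hT.2]
  · obtain ⟨heS, heH⟩ := mem_inter.1 he
    rcases mem_union.1 (hSZF heS) with heZ | heF
    · exact heZ
    · exact absurd heH (mem_sdiff.1 heF).2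
  · have := sum_sdiff_add_sum_union_le hδ (hFD ▸ hsmall) hDF
      (subset_union_left.trans hAS) (subset_union_right.trans hAS) hSZF hFS
    rw [hFD, sum_sdiff_eq_sub hGT] at this
    have : (#Z : ℝ) * δ ≤ #(G ∩ K.H ε) * δ := by gcongr
    linarith

end BMI

/-- **Lemma 3.3.** If `R` is a representative set of `K` and `ε`,
then there is a solution `S` of `K` with `S ∩ H ⊆ R` and
`p(S) ≥ (1 - 3ε)·OPT(K)`. -/
theorem exists_good_solution_in_representative (K : BMI E) (ε : ℝ)
    (hε : 0 < ε) (hε2 : ε < 1/2) (R : Finset E) (hR : K.IsRepresentative ε R) :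
    ∃ S : Finset E, K.IsSolution S ∧ S ∩ K.H ε ⊆ R ∧
      (1 - 3*ε) * K.opt ≤ ∑ e ∈ S, K.profit e := by
  obtain ⟨T, hT, hTopt⟩ := K.exists_isSolution_sum_profit_eq_opt
  rcases K.opt_nonneg.eq_or_lt with hopt | hopt
  · exact ⟨∅, K.isSolution_empty, by simp, by simp [← hopt]⟩
  set G := T.filter (ε ^ 2 * K.opt < K.profit ·)
  have hGT : G ⊆ T := filter_subset _ _
  have hTHG : T ∩ K.H ε ⊆ G := fun e he => by
    simp only [BMI.mem_H, mem_inter, mem_filter, G] at he ⊢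
    exact ⟨he.1, lt_of_le_of_lt (mul_le_mul_of_nonneg_right (by nlinarith) hopt.le) he.2⟩
  obtain ⟨Z, hZR, hZ⟩ := hR G (hT.indepLe_filter_profit_gt hε hε2.le hopt)
  obtain ⟨S, hS, hSH, hSp⟩ := hT.exists_isSolution_of_isReplacement hGT hTHG hZ (by positivity)
    fun e he => not_lt.1 fun h => (mem_sdiff.1 he).2 (mem_filter.2 ⟨(mem_sdiff.1 he).1, h⟩)
  refine ⟨S, hS, hSH.trans hZR, ?_⟩
  have hpG : ∑ e ∈ G, K.profit e ≤ K.opt :=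
    hTopt ▸ sum_le_sum_of_subset_of_nonneg hGT fun e _ _ => K.profit_nonneg e
  have hcardH := hT.card_mul_le_opt (inter_subset_left.trans hGT) (t := ε * K.opt)
    fun e he => (BMI.mem_H.1 (mem_inter.1 he).2).le
  nlinarith [mul_le_mul_of_nonneg_left hpG hε.le, mul_le_mul_of_nonneg_left hcardH hε.le]
end

section
/- Let M = (E, I) be a matroid on a finite ground set E, let c : E → ℝ≥0 and B ∈ ℝ. Then every extreme point x of the polytope P_M ∩ {x ∈ ℝ^E : Σ_{e∈E} c(e)·x_e ≤ B} has at most two non-integral entries, i.e., |{e ∈ E : x_e ∉ {0, 1}}| ≤ 2. -/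
open Finset
open scoped Classical

/-- A matroid on a finite ground set `E`, given by its collection of independent
finsets, which is non-empty, hereditary, and satisfies the exchange property. -/
structure FinMatroid (E : Type) [Fintype E] [DecidableEq E] where
  Indep : Finset E → Prop
  exists_indep : ∃ A : Finset E, Indep A
  indep_subset : ∀ ⦃A B : Finset E⦄, Indep A → B ⊆ A → Indep B
  indep_exchange : ∀ ⦃A B : Finset E⦄, Indep A → Indep B → B.card < A.card →
    ∃ e ∈ A \ B, Indep (insert e B)

/-- The indicator vector `1^B ∈ {0,1}^E` of a finset `B`. -/
def indicatorVec {E : Type} [Fintype E] [DecidableEq E] (B : Finset E) : E → ℝ :=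
  fun e => if e ∈ B then 1 else 0

/-- The matroid polytope `P_M = conv {1^B : B ∈ I}`. -/
def FinMatroid.polytope {E : Type} [Fintype E] [DecidableEq E] (M : FinMatroid E) :
    Set (E → ℝ) :=
  convexHull ℝ {x : E → ℝ | ∃ B : Finset E, M.Indep B ∧ x = indicatorVec B}

/-!
Write `x = ∑ w_A • 1_A` as a convex combination, with positive weights, of indicator vectors of
independent sets. Replacing two sets `A, B` of this support by independent sets `A', B'` with
`1_A + 1_B = 1_A' + 1_B'` (for instance `A' = B`, `B' = A`) moves `x` inside `P_M` both ways
along `1_A - 1_A'`. At an extreme point of `P_M ∩ {c ⬝ y ≤ b}` there are no two linearly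
independent such directions, since a combination of them would leave `c ⬝ y` unchanged.
With three fractional coordinates, however, either the support contains three sets, or it is
`{A, B}` with `|A ∆ B| ≥ 3`; in the latter case a (symmetric) exchange between `A` and `B`
yields a direction supported on at most two points, independent of `1_A - 1_B`.
-/

open scoped symmDiff

section TwoSidedDirections

variable {V : Type*} [AddCommGroup V] [Module ℝ V] {K : Set V} {x : V}

/-- The lineality space of the cone of feasible directions of `K` at `x`: for convex `K`, the
direction space of the smallest face of `K` containing `x`. -/
def Convex.twoSidedDirections (hK : Convex ℝ K) (hx : x ∈ K) : Submodule ℝ V where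
  carrier := {d | ∃ ε > 0, ∀ t : ℝ, |t| ≤ ε → x + t • d ∈ K}
  zero_mem' := ⟨1, one_pos, fun t _ => by simpa using hx⟩
  add_mem' := by
    rintro d₁ d₂ ⟨ε₁, hε₁, h₁⟩ ⟨ε₂, hε₂, h₂⟩
    refine ⟨min ε₁ ε₂ / 2, by positivity, fun t ht => ?_⟩
    have hmid := hK (h₁ (2 * t) ?_) (h₂ (2 * t) ?_) (by norm_num : (0 : ℝ) ≤ 1 / 2)
      (by norm_num : (0 : ℝ) ≤ 1 / 2) (by norm_num)
    · convert hmid using 1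
      module
    all_goals
      rw [abs_mul, abs_two]
      linarith [min_le_left ε₁ ε₂, min_le_right ε₁ ε₂]
  smul_mem' := by
    rintro c d ⟨ε, hε, h⟩
    refine ⟨ε / (|c| + 1), by positivity, fun t ht => ?_⟩
    rw [smul_smul]
    refine h _ ?_
    rw [abs_mul]
    calc |t| * |c| ≤ ε / (|c| + 1) * (|c| + 1) := by gcongr; linarith
      _ = ε := div_mul_cancel₀ _ (by positivity)

theorem Convex.mem_twoSidedDirections_of_add_of_sub (hK : Convex ℝ K) (hx : x ∈ K) {d : V}
    {ε₁ ε₂ : ℝ} (hε₁ : 0 < ε₁) (hε₂ : 0 < ε₂) (h₁ : x + ε₁ • d ∈ K) (h₂ : x - ε₂ • d ∈ K) :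
    d ∈ hK.twoSidedDirections hx := by
  refine ⟨min ε₁ ε₂, lt_min hε₁ hε₂, fun t ht => ?_⟩
  have ht₁ : t ≤ ε₁ := (le_abs_self t).trans (ht.trans (min_le_left _ _))
  have ht₂ : -t ≤ ε₂ := (neg_le_abs t).trans (ht.trans (min_le_right _ _))
  have hseg := hK h₂ h₁ (a := (ε₁ - t) / (ε₁ + ε₂)) (b := (ε₂ + t) / (ε₁ + ε₂))
    (by apply div_nonneg <;> linarith) (by apply div_nonneg <;> linarith)
    (by field_simp; ring)
  convert hseg using 1
  match_scalars
  · field_simp; ring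
  · field_simp; ring

theorem Convex.sum_smul_add_smul_sub_mem {ι : Type*} (hK : Convex ℝ K) {t : Finset ι}
    {w : ι → ℝ} {v : ι → V} (hw₀ : ∀ i ∈ t, 0 ≤ w i) (hw₁ : ∑ i ∈ t, w i = 1)
    (hv : ∀ i ∈ t, v i ∈ K) {j : ι} (hj : j ∈ t) {y : V} (hy : y ∈ K) :
    ∑ i ∈ t, w i • v i + w j • (y - v j) ∈ K := by
  classical
  have hmem := hK.sum_mem hw₀ hw₁ (z := Function.update v j y) fun i hi => by
    by_cases h : i = j
    · simpa [h] using hy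
    · simpa [h] using hv i hi
  convert hmem using 1
  rw [← Finset.add_sum_erase t _ hj, ← Finset.add_sum_erase t _ hj, Function.update_self,
    Finset.sum_congr rfl fun i hi => (by rw [Function.update_of_ne (Finset.ne_of_mem_erase hi)] :
      w i • Function.update v j y i = w i • v i)]
  module

theorem eq_zero_of_mem_twoSidedDirections_of_mem_extremePoints (hK : Convex ℝ K)
    (ℓ : V →ₗ[ℝ] ℝ) {b : ℝ} (hx : x ∈ (K ∩ {y | ℓ y ≤ b}).extremePoints ℝ) {d : V}
    (hd : d ∈ hK.twoSidedDirections hx.1.1) (hℓ : ℓ d = 0) : d = 0 := by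
  obtain ⟨ε, hε, h⟩ := hd
  have hmem : ∀ t : ℝ, |t| ≤ ε → x + t • d ∈ K ∩ {y | ℓ y ≤ b} := fun t ht =>
    ⟨h t ht, by simpa [hℓ] using hx.1.2⟩
  have hseg : x ∈ openSegment ℝ (x + ε • d) (x + (-ε) • d) :=
    ⟨1 / 2, 1 / 2, by norm_num, by norm_num, by norm_num, by module⟩
  have := (mem_extremePoints.1 hx).2 _ (hmem ε (abs_of_pos hε).le) _
    (hmem (-ε) (by rw [abs_neg, abs_of_pos hε])) hseg
  simpa [hε.ne'] using this.1

theorem not_linearIndependent_of_mem_extremePoints (hK : Convex ℝ K) (ℓ : V →ₗ[ℝ] ℝ) {b : ℝ}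
    (hx : x ∈ (K ∩ {y | ℓ y ≤ b}).extremePoints ℝ) {d₁ d₂ : V}
    (hd₁ : d₁ ∈ hK.twoSidedDirections hx.1.1) (hd₂ : d₂ ∈ hK.twoSidedDirections hx.1.1) :
    ¬ LinearIndependent ℝ ![d₁, d₂] := by
  intro hli
  have hd : ℓ d₂ • d₁ - ℓ d₁ • d₂ = 0 :=
    eq_zero_of_mem_twoSidedDirections_of_mem_extremePoints hK ℓ hx
      (sub_mem (Submodule.smul_mem _ _ hd₁) (Submodule.smul_mem _ _ hd₂)) (by simp [mul_comm])
  obtain ⟨-, hℓ₁⟩ := LinearIndependent.pair_iff.1 hli (ℓ d₂) (-ℓ d₁)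
    (by rw [← hd, neg_smul, sub_eq_add_neg])
  exact hli.ne_zero 0 (eq_zero_of_mem_twoSidedDirections_of_mem_extremePoints hK ℓ hx hd₁
    (by simpa using hℓ₁))

end TwoSidedDirections

theorem linearIndependent_pair_of_apply_eq_zero {ι K : Type*} [Field K] {d₁ d₂ : ι → K} {p : ι}
    (hd₂ : d₂ ≠ 0) (h₁ : d₁ p ≠ 0) (h₂ : d₂ p = 0) : LinearIndependent K ![d₁, d₂] := by
  refine LinearIndependent.pair_iff.2 fun s t hst => ?_
  have hs : s = 0 := by simpa [h₁, h₂] using congrFun hst p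
  subst hs
  exact ⟨rfl, by simpa [hd₂] using hst⟩

open Set in
theorem Matroid.Indep.exists_symm_exchange {α : Type*} {M : Matroid α} {A B : Set α} {e : α}
    (hA : M.Indep A) (hB : M.Indep B) (heA : e ∈ A) (heB : e ∉ B)
    (hdep : ¬ M.Indep (insert e B)) :
    ∃ f ∈ B \ A, M.Indep (insert f (A \ {e})) ∧ M.Indep (insert e (B \ {f})) := by
  have hecl : e ∈ M.closure B := by
    by_contra h
    exact hdep ((hB.insert_indep_iff_of_notMem heB).2 ⟨hA.subset_ground heA, h⟩)
  by_contra! h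
  have hsub : M.fundCircuit e B \ {e} ⊆ M.closure (A \ {e}) := by
    rintro f ⟨hfC, hfe : f ≠ e⟩
    have hfB : f ∈ B := by
      simpa [hfe] using M.fundCircuit_subset_insert e B hfC
    by_cases hfA : f ∈ A
    · exact M.subset_closure _ (sdiff_subset.trans hA.subset_ground) ⟨hfA, hfe⟩
    have hexch : M.Indep (insert e (B \ {f})) := by
      rw [insert_sdiff_singleton_comm hfe.symm]
      exact (hB.mem_fundCircuit_iff hecl heB).1 hfC
    by_contra hcl
    exact h f ⟨hfB, hfA⟩ ((hA.sdiff {e}).insert_indep_iff_of_notMem (by simp [hfA])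
      |>.2 ⟨hB.subset_ground hfB, hcl⟩) hexch
  exact hA.notMem_closure_sdiff_of_mem heA <| M.closure_subset_closure_of_subset_closure hsub <|
    (hB.fundCircuit_isCircuit hecl heB).mem_closure_sdiff_singleton_of_mem (M.mem_fundCircuit e B)

section IndicatorVec

variable {E : Type} [Fintype E] [DecidableEq E]

theorem indicatorVec_sub_apply_eq_zero_iff {A B : Finset E} {p : E} :
    (indicatorVec A - indicatorVec B) p = 0 ↔ p ∉ A ∆ B := by
  by_cases hA : p ∈ A <;> by_cases hB : p ∈ B <;> simp [indicatorVec, mem_symmDiff, hA, hB]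

theorem indicatorVec_sub_ne_zero {A B : Finset E} (h : A ≠ B) :
    indicatorVec A - indicatorVec B ≠ 0 := by
  obtain ⟨p, hp⟩ := symmDiff_nonempty.2 h
  exact fun h0 => indicatorVec_sub_apply_eq_zero_iff.1 (congrFun h0 p) hp

theorem indicatorVec_injective : Function.Injective (indicatorVec (E := E)) := fun A B h => by
  by_contra hAB
  exact indicatorVec_sub_ne_zero hAB (sub_eq_zero.2 h)

theorem linearIndependent_indicatorVec_sub {A B C D : Finset E} {p : E} (hCD : C ≠ D)
    (hp : p ∈ A ∆ B) (hp' : p ∉ C ∆ D) :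
    LinearIndependent ℝ ![indicatorVec A - indicatorVec B, indicatorVec C - indicatorVec D] :=
  linearIndependent_pair_of_apply_eq_zero (indicatorVec_sub_ne_zero hCD)
    (mt indicatorVec_sub_apply_eq_zero_iff.1 (not_not.2 hp))
    (indicatorVec_sub_apply_eq_zero_iff.2 hp')

theorem sum_smul_indicatorVec_apply (T : Finset (Finset E)) (w : Finset E → ℝ) (p : E) :
    (∑ A ∈ T, w A • indicatorVec A) p = ∑ A ∈ T with p ∈ A, w A := by
  simp [Finset.sum_apply, indicatorVec, Finset.sum_filter]

theorem exists_mem_and_exists_notMem_of_sum_smul_indicatorVec_apply {T : Finset (Finset E)}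
    {w : Finset E → ℝ} (hw : ∑ A ∈ T, w A = 1) {p : E}
    (h₀ : (∑ A ∈ T, w A • indicatorVec A) p ≠ 0) (h₁ : (∑ A ∈ T, w A • indicatorVec A) p ≠ 1) :
    (∃ A ∈ T, p ∈ A) ∧ ∃ B ∈ T, p ∉ B := by
  rw [sum_smul_indicatorVec_apply] at h₀ h₁
  refine ⟨?_, ?_⟩
  · obtain ⟨A, hA, -⟩ := exists_ne_zero_of_sum_ne_zero h₀
    exact ⟨A, mem_filter.1 hA⟩
  · by_contra! h
    rw [filter_true_of_mem h, hw] at h₁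
    exact h₁ rfl

end IndicatorVec

namespace FinMatroid

variable {E : Type} [Fintype E] [DecidableEq E]

theorem indep_empty (M : FinMatroid E) : M.Indep ∅ :=
  let ⟨_, hA⟩ := M.exists_indep
  M.indep_subset hA (empty_subset _)

def toMatroid (M : FinMatroid E) : Matroid E :=
  (IndepMatroid.ofFinset Set.univ M.Indep M.indep_empty
    (fun _ _ hJ hIJ => M.indep_subset hJ hIJ)
    (fun _ _ hI hJ hlt =>
      let ⟨e, he, hins⟩ := M.indep_exchange hJ hI hlt
      ⟨e, (mem_sdiff.1 he).1, (mem_sdiff.1 he).2, hins⟩)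
    (fun _ _ => Set.subset_univ _)).matroid

@[simp]
theorem toMatroid_indep_coe (M : FinMatroid E) {A : Finset E} :
    M.toMatroid.Indep A ↔ M.Indep A := by
  simp [toMatroid]

theorem convex_polytope (M : FinMatroid E) : Convex ℝ M.polytope := convex_convexHull ℝ _

variable {M : FinMatroid E} {A B : Finset E} {e : E}

theorem exists_symm_exchange (hA : M.Indep A) (hB : M.Indep B) (heA : e ∈ A) (heB : e ∉ B)
    (hdep : ¬ M.Indep (insert e B)) :
    ∃ f ∈ B \ A, M.Indep (insert f (A.erase e)) ∧ M.Indep (insert e (B.erase f)) := by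
  rw [← toMatroid_indep_coe] at hA hB hdep
  obtain ⟨f, hf, hfA, hfB⟩ := hA.exists_symm_exchange hB heA heB (by simpa using hdep)
  exact ⟨f, by simpa using hf, by simpa [← M.toMatroid_indep_coe] using hfA,
    by simpa [← M.toMatroid_indep_coe] using hfB⟩

theorem exists_indicatorVec_exchange (hA : M.Indep A) (hB : M.Indep B) (heA : e ∈ A)
    (heB : e ∉ B) :
    ∃ A' B', M.Indep A' ∧ M.Indep B' ∧
      indicatorVec A + indicatorVec B = indicatorVec A' + indicatorVec B' ∧
      e ∈ A ∆ A' ∧ #(A ∆ A') ≤ 2 := by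
  by_cases hins : M.Indep (insert e B)
  · refine ⟨A.erase e, insert e B, M.indep_subset hA (erase_subset e A), hins, ?_,
      by simp [mem_symmDiff, heA], ?_⟩
    · funext p
      by_cases hp : p = e <;> simp [indicatorVec, hp, heA, heB]
    · refine (card_le_card (t := {e, e}) fun p => ?_).trans card_le_two
      by_cases hp : p = e <;> simp [mem_symmDiff, hp]
  · obtain ⟨f, hf, hfA, hfB⟩ := exists_symm_exchange hA hB heA heB hins
    rw [mem_sdiff] at hf
    have hfe : f ≠ e := by rintro rfl; exact heB hf.1
    refine ⟨insert f (A.erase e), insert e (B.erase f), hfA, hfB, ?_,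
      by simp [mem_symmDiff, heA, hfe.symm], ?_⟩
    · funext p
      by_cases hpe : p = e <;> by_cases hpf : p = f <;> simp [indicatorVec, hfe.symm, *]
    · refine (card_le_card (t := {e, f}) fun p => ?_).trans card_le_two
      by_cases hpe : p = e <;> by_cases hpf : p = f <;> simp [mem_symmDiff, *]

theorem indicatorVec_mem_polytope (hA : M.Indep A) : indicatorVec A ∈ M.polytope :=
  subset_convexHull ℝ _ ⟨A, hA, rfl⟩

theorem exists_sum_eq_of_mem_polytope {x : E → ℝ} (hx : x ∈ M.polytope) :
    ∃ (T : Finset (Finset E)) (w : Finset E → ℝ), (∀ A ∈ T, M.Indep A ∧ 0 < w A) ∧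
      ∑ A ∈ T, w A = 1 ∧ ∑ A ∈ T, w A • indicatorVec A = x := by
  have hP : M.polytope = convexHull ℝ ↑(({A | M.Indep A} : Finset _).image indicatorVec) := by
    rw [polytope]
    congr 1
    ext
    simp [eq_comm]
  rw [hP, Finset.mem_convexHull'] at hx
  obtain ⟨W, hW₀, hW₁, hWx⟩ := hx
  rw [sum_image indicatorVec_injective.injOn] at hW₁ hWx
  have hpos : ∀ A ∈ ({A | M.Indep A} : Finset _), W (indicatorVec A) ≠ 0 →
      0 < W (indicatorVec A) :=
    fun A hA hne => (hW₀ _ (mem_image_of_mem _ hA)).lt_of_ne' hne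
  refine ⟨({A | M.Indep A} : Finset _).filter (fun A => 0 < W (indicatorVec A)),
    fun A => W (indicatorVec A), by simp +contextual, ?_, ?_⟩
  · rwa [sum_filter_of_ne hpos]
  · rwa [sum_filter_of_ne fun A hA hne => hpos A hA (left_ne_zero_of_smul hne)]

variable {x : E → ℝ} {T : Finset (Finset E)} {w : Finset E → ℝ}

theorem indicatorVec_sub_mem_twoSidedDirections (hxP : x ∈ M.polytope)
    (hT : ∀ A ∈ T, M.Indep A ∧ 0 < w A) (hw : ∑ A ∈ T, w A = 1)
    (hx : ∑ A ∈ T, w A • indicatorVec A = x) ⦃A B A' B' : Finset E⦄ (hA : A ∈ T) (hB : B ∈ T)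
    (hA' : M.Indep A') (hB' : M.Indep B')
    (hsum : indicatorVec A + indicatorVec B = indicatorVec A' + indicatorVec B') :
    indicatorVec A - indicatorVec A' ∈ M.convex_polytope.twoSidedDirections hxP := by
  have hmove : ∀ C ∈ T, ∀ Y, M.Indep Y →
      x + w C • (indicatorVec Y - indicatorVec C) ∈ M.polytope :=
    fun C hC Y hY => hx ▸ M.convex_polytope.sum_smul_add_smul_sub_mem
      (fun A hA => (hT A hA).2.le) hw (fun A hA => indicatorVec_mem_polytope (hT A hA).1) hC
      (indicatorVec_mem_polytope hY)
  refine M.convex_polytope.mem_twoSidedDirections_of_add_of_sub hxP (hT B hB).2 (hT A hA).2 ?_ ?_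
  · rw [sub_eq_sub_iff_add_eq_add.2 (hsum.trans (add_comm _ _))]
    exact hmove B hB B' hB'
  · convert hmove A hA A' hA' using 1
    module

theorem exists_linearIndependent_twoSidedDirections (hxP : x ∈ M.polytope)
    (hfrac : 2 < #(univ.filter fun e => x e ≠ 0 ∧ x e ≠ 1)) :
    ∃ d₁ ∈ M.convex_polytope.twoSidedDirections hxP,
      ∃ d₂ ∈ M.convex_polytope.twoSidedDirections hxP, LinearIndependent ℝ ![d₁, d₂] := by
  obtain ⟨T, w, hT, hw, hx⟩ := exists_sum_eq_of_mem_polytope hxP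
  have hsplit : ∀ q ∈ univ.filter fun e => x e ≠ 0 ∧ x e ≠ 1,
      (∃ A ∈ T, q ∈ A) ∧ ∃ B ∈ T, q ∉ B := fun q hq => by
    rw [mem_filter, ← hx] at hq
    exact exists_mem_and_exists_notMem_of_sum_smul_indicatorVec_apply hw hq.2.1 hq.2.2
  have hdir := indicatorVec_sub_mem_twoSidedDirections hxP hT hw hx
  obtain ⟨p, hp⟩ := card_pos.1 (zero_lt_two.trans hfrac)
  obtain ⟨⟨A, hA, hpA⟩, B, hB, hpB⟩ := hsplit p hp
  have hpAB : p ∈ A ∆ B := mem_symmDiff.2 (Or.inl ⟨hpA, hpB⟩)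
  have hd₁ := hdir hA hB (hT B hB).1 (hT A hA).1 (add_comm _ _)
  by_cases hC : ∃ C ∈ T, C ≠ A ∧ C ≠ B
  · obtain ⟨C, hC, hCA, hCB⟩ := hC
    by_cases hpC : p ∈ C
    · exact ⟨_, hd₁, _, hdir hA hC (hT C hC).1 (hT A hA).1 (add_comm _ _),
        linearIndependent_indicatorVec_sub hCA.symm hpAB (by simp [mem_symmDiff, hpA, hpC])⟩
    · exact ⟨_, hd₁, _, hdir hB hC (hT C hC).1 (hT B hB).1 (add_comm _ _),
        linearIndependent_indicatorVec_sub hCB.symm hpAB (by simp [mem_symmDiff, hpB, hpC])⟩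
  · push Not at hC
    have hsub : (univ.filter fun e => x e ≠ 0 ∧ x e ≠ 1) ⊆ A ∆ B := fun q hq => by
      obtain ⟨⟨C, hC', hqC⟩, D, hD, hqD⟩ := hsplit q hq
      have hCAB : C = A ∨ C = B := or_iff_not_imp_left.2 (hC C hC')
      have hDAB : D = A ∨ D = B := or_iff_not_imp_left.2 (hC D hD)
      rw [mem_symmDiff]
      rcases hCAB with rfl | rfl <;> rcases hDAB with rfl | rfl <;> tauto
    obtain ⟨A', B', hA', hB', hsum, heA', hcard⟩ :=
      exists_indicatorVec_exchange (hT A hA).1 (hT B hB).1 hpA hpB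
    obtain ⟨q, hq, hq'⟩ :=
      exists_mem_notMem_of_card_lt_card (hcard.trans_lt (hfrac.trans_le (card_le_card hsub)))
    exact ⟨_, hd₁, _, hdir hA hB hA' hB' hsum,
      linearIndependent_indicatorVec_sub (fun h => by simp [h] at heA') hq hq'⟩

end FinMatroid

theorem extreme_point_at_most_two_fractional_general {E : Type} [Fintype E] [DecidableEq E]
    (M : FinMatroid E) (c : E → ℝ) (b : ℝ) (x : E → ℝ)
    (hx : x ∈ Set.extremePoints ℝ
      (M.polytope ∩ {y : E → ℝ | ∑ e : E, c e * y e ≤ b})) :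
    (univ.filter (fun e => x e ≠ 0 ∧ x e ≠ 1)).card ≤ 2 := by
  by_contra! hfrac
  obtain ⟨d₁, hd₁, d₂, hd₂, hli⟩ := M.exists_linearIndependent_twoSidedDirections hx.1.1 hfrac
  exact not_linearIndependent_of_mem_extremePoints M.convex_polytope (dotProductBilin ℝ ℝ c) hx
    hd₁ hd₂ hli

/-- Every extreme point of the intersection of a matroid polytope
with a single budget constraint `∑ e, c e * x e ≤ b` (with `c` nonnegative) has at
most two non-integral entries. -/
theorem extreme_point_at_most_two_fractional {E : Type} [Fintype E] [DecidableEq E]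
    (M : FinMatroid E) (c : E → ℝ) (hc : ∀ e, 0 ≤ c e) (b : ℝ) (x : E → ℝ)
    (hx : x ∈ Set.extremePoints ℝ
      (M.polytope ∩ {y : E → ℝ | ∑ e : E, c e * y e ≤ b})) :
    (univ.filter (fun e => x e ≠ 0 ∧ x e ≠ 1)).card ≤ 2 :=
  extreme_point_at_most_two_fractional_general M c b x hx
end

section
/- Let K = (E, I, c, p, β) be a BMI instance and 0 < ε < 1/2. Then there exists a representative set R of K and ε with |R| ≤ q(ε)·(log_{1−ε}(ε/2) + 1). -/
open Finset
open scoped Classical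

variable {E : Type} [Fintype E] [DecidableEq E]

/-- Extend an independent set to an insertion-maximal independent subset of `U`. -/
lemma BMI.exists_maximal_indep (K : BMI E) (U B : Finset E) (hB : K.Indep B) (hBU : B ⊆ U) :
    ∃ B', B ⊆ B' ∧ B' ⊆ U ∧ K.Indep B' ∧ ∀ e ∈ U, e ∉ B' → ¬K.Indep (insert e B') := by
  obtain ⟨B', hB'mem, hB'max⟩ := Finset.exists_max_image
    (U.powerset.filter fun C => B ⊆ C ∧ K.Indep C) Finset.card
    ⟨B, by simp [hBU, hB]⟩
  simp only [Finset.mem_filter, Finset.mem_powerset] at hB'mem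
  refine ⟨B', hB'mem.2.1, hB'mem.1, hB'mem.2.2, fun e heU heB' hind => ?_⟩
  have : (insert e B').card ≤ B'.card := by
    refine hB'max _ ?_
    simp only [Finset.mem_filter, Finset.mem_powerset]
    exact ⟨Finset.insert_subset heU hB'mem.1,
      hB'mem.2.1.trans (Finset.subset_insert _ _), hind⟩
  rw [Finset.card_insert_of_notMem heB'] at this
  omega

/-- Two insertion-maximal independent subsets of `U` have the same cardinality. -/
lemma BMI.maximal_card_eq (K : BMI E) {U B₁ B₂ : Finset E} (h₁ : K.Indep B₁) (h₂ : K.Indep B₂)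
    (hU₁ : B₁ ⊆ U) (hU₂ : B₂ ⊆ U)
    (m₁ : ∀ e ∈ U, e ∉ B₁ → ¬K.Indep (insert e B₁))
    (m₂ : ∀ e ∈ U, e ∉ B₂ → ¬K.Indep (insert e B₂)) : B₁.card = B₂.card := by
  by_contra h
  rcases Nat.lt_or_ge B₁.card B₂.card with hlt | hge
  · obtain ⟨e, he, hi⟩ := K.indep_exchange h₂ h₁ hlt
    rw [Finset.mem_sdiff] at he
    exact m₁ e (hU₂ he.1) he.2 hi
  · have hlt : B₂.card < B₁.card := by omega
    obtain ⟨e, he, hi⟩ := K.indep_exchange h₁ h₂ hlt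
    rw [Finset.mem_sdiff] at he
    exact m₂ e (hU₁ he.1) he.2 hi

/-- Key exchange lemma: if `g` can be added to `B` but not to `R'`, then some
element of `R'` outside `B` can be added to `B`. -/
lemma BMI.key_exchange (K : BMI E) {B R' : Finset E} {g : E}
    (hB : K.Indep B) (hgB : K.Indep (insert g B)) (hg : g ∉ B)
    (hR' : K.Indep R') (hdep : ¬K.Indep (insert g R')) :
    ∃ z ∈ R', z ∉ B ∧ K.Indep (insert z B) := by
  by_contra hcon
  push_neg at hcon
  obtain ⟨R'', hsub, hsubU, hind, hmax⟩ :=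
    K.exists_maximal_indep (B ∪ R') R' hR' Finset.subset_union_right
  have hBmax : ∀ e ∈ B ∪ R', e ∉ B → ¬K.Indep (insert e B) := by
    intro e he heB
    rcases Finset.mem_union.mp he with h | h
    · exact absurd h heB
    · exact fun hi => (hcon e h heB) hi
  have hcard : R''.card = B.card :=
    K.maximal_card_eq hind hB hsubU Finset.subset_union_left hmax hBmax
  have hlt : R''.card < (insert g B).card := by
    rw [hcard, Finset.card_insert_of_notMem hg]; omega
  obtain ⟨e, he, hins⟩ := K.indep_exchange hgB hind hlt
  rw [Finset.mem_sdiff] at he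
  rcases Finset.mem_insert.mp he.1 with rfl | heB
  · exact hdep (K.indep_subset hins (Finset.insert_subset_insert _ hsub))
  · exact hmax e (Finset.mem_union_left _ heB) he.2 hins

/-- Greedy min-cost construction with cap `N` and initial segment `S₀`. -/
lemma BMI.exists_greedy (K : BMI E) (N : ℕ) :
    ∀ C S₀ : Finset E, K.Indep S₀ → S₀.card ≤ N →
      (∀ e ∈ C, ∀ f ∈ S₀, K.cost f ≤ K.cost e) →
      ∃ S, S₀ ⊆ S ∧ S ⊆ S₀ ∪ C ∧ K.Indep S ∧ S.card ≤ N ∧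
        ∀ g ∈ C, g ∉ S →
          ¬K.Indep (insert g (S.filter fun e => K.cost e ≤ K.cost g)) ∨
          N ≤ (S.filter fun e => K.cost e ≤ K.cost g).card := by
  intro C
  induction C using Finset.strongInduction with
  | _ C ih =>
    intro S₀ hS₀ hcard hcost
    rcases C.eq_empty_or_nonempty with rfl | hne
    · exact ⟨S₀, Finset.Subset.refl _, Finset.subset_union_left, hS₀, hcard, by simp⟩
    obtain ⟨g₀, hg₀C, hg₀min⟩ := Finset.exists_min_image C K.cost hne
    have hsub : C.erase g₀ ⊂ C := Finset.erase_ssubset hg₀C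
    by_cases hacc : S₀.card < N ∧ K.Indep (insert g₀ S₀)
    · -- accept g₀
      obtain ⟨S, hsub1, hsub2, hind, hcd, hprop⟩ := ih _ hsub (insert g₀ S₀) hacc.2
        (le_trans (Finset.card_insert_le _ _) (by omega))
        (by intro e he f hf
            rcases Finset.mem_insert.mp hf with rfl | hf
            · exact hg₀min e (Finset.mem_of_mem_erase he)
            · exact hcost e (Finset.mem_of_mem_erase he) f hf)
      refine ⟨S, (Finset.subset_insert _ _).trans hsub1, ?_, hind, hcd, ?_⟩
      · refine hsub2.trans ?_
        intro x hx
        rcases Finset.mem_union.mp hx with hx | hx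
        · rcases Finset.mem_insert.mp hx with rfl | hx
          · exact Finset.mem_union_right _ hg₀C
          · exact Finset.mem_union_left _ hx
        · exact Finset.mem_union_right _ (Finset.mem_of_mem_erase hx)
      · intro g hg hgS
        rcases eq_or_ne g g₀ with rfl | hne'
        · exact absurd (hsub1 (Finset.mem_insert_self _ _)) hgS
        · exact hprop g (Finset.mem_erase.mpr ⟨hne', hg⟩) hgS
    · -- reject g₀
      obtain ⟨S, hsub1, hsub2, hind, hcd, hprop⟩ := ih _ hsub S₀ hS₀ hcard
        (fun e he f hf => hcost e (Finset.mem_of_mem_erase he) f hf)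
      have hS₀filter : S₀ ⊆ S.filter fun e => K.cost e ≤ K.cost g₀ := by
        intro f hf
        exact Finset.mem_filter.mpr ⟨hsub1 hf, hcost g₀ hg₀C f hf⟩
      refine ⟨S, hsub1, hsub2.trans (Finset.union_subset_union_right (Finset.erase_subset _ _)),
        hind, hcd, ?_⟩
      intro g hg hgS
      rcases eq_or_ne g g₀ with rfl | hne'
      · rcases not_and_or.mp hacc with h | h
        · right
          calc N ≤ S₀.card := by omega
            _ ≤ _ := Finset.card_le_card hS₀filter
        · left
          intro hi
          exact h (K.indep_subset hi (Finset.insert_subset_insert _ hS₀filter))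
      · exact hprop g (Finset.mem_erase.mpr ⟨hne', hg⟩) hgS

/-- **Lemma 3.4.** Every BMI instance has a representative set `R`
of size at most `q(ε)·(log_{1-ε}(ε/2) + 1)`. -/
theorem exists_small_representative_set (K : BMI E) (ε : ℝ)
    (hε : 0 < ε) (hε2 : ε < 1/2) :
    ∃ R : Finset E, K.IsRepresentative ε R ∧
      (R.card : ℝ) ≤ qe ε * (Real.logb (1 - ε) (ε/2) + 1) := by
  classical
  have hε1 : (0:ℝ) < 1 - ε := by linarith
  have hε1' : (1:ℝ) - ε < 1 := by linarith
  have hne1 : (1:ℝ) - ε ≠ 1 := by linarith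
  set OPT := K.opt with hOPT
  set Hs := K.H ε with hHs
  -- facts about OPT
  have hbdd : BddAbove {v : ℝ | ∃ X : Finset E, K.IsSolution X ∧ v = ∑ e ∈ X, K.profit e} := by
    apply Set.Finite.bddAbove
    apply Set.Finite.subset (Set.finite_range (fun X : Finset E => ∑ e ∈ X, K.profit e))
    rintro v ⟨X, _, rfl⟩
    exact ⟨X, rfl⟩
  have hple : ∀ e : E, K.profit e ≤ OPT := by
    intro e
    refine le_csSup hbdd ⟨{e}, ⟨K.indep_singleton e, by simpa using K.cost_le_budget e⟩, by simp⟩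
  set N := ⌊qe ε⌋₊ with hN
  set L := Real.logb (1 - ε) (ε/2) with hLdef
  have hL : 0 < L := Real.logb_pos_of_base_lt_one hε1 hε1' (by linarith) (by linarith)
  set M := ⌈L⌉₊ with hM
  have hLM : L ≤ (M:ℝ) := Nat.le_ceil L
  -- the profit classes
  set Cl : ℕ → Finset E := fun n =>
    Hs.filter (fun e => (1-ε)^(n+1) * OPT < K.profit e ∧ K.profit e ≤ (1-ε)^n * OPT) with hCl
  have hclass : ∀ e ∈ Hs, ∃ n < M, e ∈ Cl n := by
    intro e he
    have hpe : ε * OPT < K.profit e := by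
      rw [hHs, BMI.H] at he
      exact (Finset.mem_filter.mp he).2
    have hOPTpos : 0 < OPT := by nlinarith [hple e, K.profit_nonneg e]
    have hP0 : K.profit e ≤ (1-ε)^(0:ℕ) * OPT := by simpa using hple e
    set n := Nat.findGreatest (fun m => K.profit e ≤ (1-ε)^m * OPT) M with hn
    have hspec : K.profit e ≤ (1-ε)^n * OPT := by
      have h := Nat.findGreatest_spec (P := fun m => K.profit e ≤ (1-ε)^m * OPT)
        (Nat.zero_le M) hP0
      simpa [← hn] using h
    have hnM : n ≤ M := by rw [hn]; exact Nat.findGreatest_le M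
    have hMpow : (1-ε)^M * OPT < K.profit e := by
      have h2 : ((1:ℝ)-ε) ^ ((M:ℕ):ℝ) ≤ (1-ε) ^ L :=
        Real.rpow_le_rpow_of_exponent_ge hε1 (le_of_lt hε1') hLM
      rw [Real.rpow_logb hε1 hne1 (by linarith : (0:ℝ) < ε/2), Real.rpow_natCast] at h2
      nlinarith
    have hnltM : n < M := by
      rcases Nat.lt_or_ge n M with h | h
      · exact h
      · exfalso
        have hnM' : n = M := le_antisymm hnM h
        rw [hnM'] at hspec
        linarith
    refine ⟨n, hnltM, ?_⟩
    have hgr : ¬ (K.profit e ≤ (1-ε)^(n+1) * OPT) := by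
      have h := Nat.findGreatest_is_greatest (P := fun m => K.profit e ≤ (1-ε)^m * OPT)
        (k := n+1) (by rw [← hn]; omega) (by omega)
      simpa using h
    simp only [hCl, Finset.mem_filter]
    exact ⟨he, lt_of_not_ge hgr, hspec⟩
  -- greedy representative sets per class
  choose Rf hR1 hR2 hR3 hR4 hR5 using
    fun n => K.exists_greedy N (Cl n) ∅ K.indep_empty (Nat.zero_le N) (by simp)
  have hRfC : ∀ n, Rf n ⊆ Cl n := fun n => (hR2 n).trans (by simp)
  set R := (Finset.range M).biUnion Rf with hRdef
  refine ⟨R, ?_, ?_⟩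
  · -- representativeness
    intro G hG
    have hGind : K.Indep G := hG.1
    have hGN : G.card ≤ N := Nat.le_floor hG.2
    have key : ∀ k : ℕ, ∀ T ⊆ G ∩ Hs, ((G ∩ Hs) \ T).card = k →
        ∃ Z, Z ⊆ R ∧ Disjoint Z ((G \ Hs) ∪ T) ∧ K.Indep ((G \ Hs) ∪ T ∪ Z) ∧
          ((G \ Hs) ∪ T ∪ Z).card = G.card ∧
          ∑ e ∈ Z, K.cost e ≤ ∑ e ∈ (G ∩ Hs) \ T, K.cost e ∧
          (1 - ε) * ∑ e ∈ (G ∩ Hs) \ T, K.profit e ≤ ∑ e ∈ Z, K.profit e := by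
      intro k
      induction k with
      | zero =>
        intro T hT hcd
        have hTeq : T = G ∩ Hs :=
          Finset.Subset.antisymm hT
            (Finset.sdiff_eq_empty_iff_subset.mp (Finset.card_eq_zero.mp hcd))
        subst hTeq
        refine ⟨∅, Finset.empty_subset _, by simp, ?_, ?_, by simp, by simp⟩
        · rw [Finset.union_empty, Finset.sdiff_union_inter]
          exact hGind
        · rw [Finset.union_empty, Finset.sdiff_union_inter]
      | succ k ihk =>
        intro T hT hcd
        have hne : ((G ∩ Hs) \ T).Nonempty := by
          rw [← Finset.card_pos, hcd]; omega
        obtain ⟨g, hgmem⟩ := hne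
        rw [Finset.mem_sdiff] at hgmem
        obtain ⟨hgGH, hgT⟩ := hgmem
        have hgG : g ∈ G := (Finset.mem_inter.mp hgGH).1
        have hgH : g ∈ Hs := (Finset.mem_inter.mp hgGH).2
        set T' := insert g T with hT'
        have hT'sub : T' ⊆ G ∩ Hs := Finset.insert_subset hgGH hT
        have hgnot : g ∉ (G ∩ Hs) \ T' := by simp [hT']
        have hsd : (G ∩ Hs) \ T = insert g ((G ∩ Hs) \ T') := by
          rw [hT', Finset.sdiff_insert,
            Finset.insert_erase (Finset.mem_sdiff.mpr ⟨hgGH, hgT⟩)]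
        have hcd' : ((G ∩ Hs) \ T').card = k := by
          have h2 : ((G ∩ Hs) \ T).card = ((G ∩ Hs) \ T').card + 1 := by
            rw [hsd, Finset.card_insert_of_notMem hgnot]
          omega
        obtain ⟨Z', hZR, hZdisj, hXind, hXcard, hZcost, hZprof⟩ := ihk T' hT'sub hcd'
        set X' := (G \ Hs) ∪ T' ∪ Z' with hX'
        have hgX' : g ∈ X' := by
          simp [hX', hT']
        have hgZ' : g ∉ Z' := fun h =>
          (Finset.disjoint_left.mp hZdisj h)
            (Finset.mem_union_right _ (Finset.mem_insert_self _ _))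
        have hgGH' : g ∉ G \ Hs := by simp [hgH]
        obtain ⟨n, hnM, hgCl⟩ := hclass g hgH
        have hgCl' := hgCl
        simp only [hCl, Finset.mem_filter] at hgCl'
        have herase : X'.erase g = (G \ Hs) ∪ T ∪ Z' := by
          ext x
          simp only [hX', hT', Finset.mem_erase, Finset.mem_union, Finset.mem_insert]
          constructor
          · rintro ⟨hxg, (h | (h | h)) | h⟩
            · exact Or.inl (Or.inl h)
            · exact absurd h hxg
            · exact Or.inl (Or.inr h)
            · exact Or.inr h
          · rintro ((h | h) | h)
            · exact ⟨ne_of_mem_of_not_mem h hgGH', Or.inl (Or.inl h)⟩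
            · exact ⟨ne_of_mem_of_not_mem h hgT, Or.inl (Or.inr (Or.inr h))⟩
            · exact ⟨ne_of_mem_of_not_mem h hgZ', Or.inr h⟩
        have hz : ∃ z, z ∈ Rf n ∧ z ∉ X'.erase g ∧ K.cost z ≤ K.cost g ∧
            (1-ε) * K.profit g ≤ K.profit z ∧ K.Indep (insert z (X'.erase g)) := by
          have hprof_z : ∀ z ∈ Rf n, (1-ε) * K.profit g ≤ K.profit z := by
            intro z hzm
            have hzCl := hRfC n hzm
            simp only [hCl, Finset.mem_filter] at hzCl
            have h1 : (1-ε) * K.profit g ≤ (1-ε) * ((1-ε)^n * OPT) :=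
              mul_le_mul_of_nonneg_left hgCl'.2.2 (le_of_lt hε1)
            have h2 : (1-ε) * ((1-ε)^n * OPT) = (1-ε)^(n+1) * OPT := by ring
            linarith [hzCl.2.1]
          by_cases hgRf : g ∈ Rf n
          · exact ⟨g, hgRf, Finset.notMem_erase _ _, le_refl _, hprof_z g hgRf,
              by rw [Finset.insert_erase hgX']; exact hXind⟩
          · have hBind : K.Indep (X'.erase g) := K.indep_subset hXind (Finset.erase_subset _ _)
            have hfind : K.Indep ((Rf n).filter fun e => K.cost e ≤ K.cost g) :=
              K.indep_subset (hR3 n) (Finset.filter_subset _ _)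
            rcases hR5 n g hgCl hgRf with hdep | hcap
            · obtain ⟨z, hzf, hzB, hzind⟩ := K.key_exchange hBind
                (by rw [Finset.insert_erase hgX']; exact hXind)
                (Finset.notMem_erase _ _) hfind hdep
              obtain ⟨hzRf, hzc⟩ := Finset.mem_filter.mp hzf
              exact ⟨z, hzRf, hzB, hzc, hprof_z z hzRf, hzind⟩
            · have hG1 : 1 ≤ G.card := Finset.card_pos.mpr ⟨g, hgG⟩
              have hlt : (X'.erase g).card <
                  ((Rf n).filter fun e => K.cost e ≤ K.cost g).card := by
                rw [Finset.card_erase_of_mem hgX']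
                omega
              obtain ⟨z, hzf, hzind⟩ := K.indep_exchange hfind hBind hlt
              rw [Finset.mem_sdiff] at hzf
              obtain ⟨hzRf, hzc⟩ := Finset.mem_filter.mp hzf.1
              exact ⟨z, hzRf, hzf.2, hzc, hprof_z z hzRf, hzind⟩
        obtain ⟨z, hzRf, hzE, hzc, hzp, hzind⟩ := hz
        have hzZ' : z ∉ Z' := fun h => hzE (by rw [herase]; exact Finset.mem_union_right _ h)
        have hzGH : z ∉ G \ Hs := fun h => hzE (by
          rw [herase]; exact Finset.mem_union_left _ (Finset.mem_union_left _ h))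
        have hzT : z ∉ T := fun h => hzE (by
          rw [herase]; exact Finset.mem_union_left _ (Finset.mem_union_right _ h))
        have hXeq : (G \ Hs) ∪ T ∪ insert z Z' = insert z (X'.erase g) := by
          rw [Finset.union_insert, herase]
        refine ⟨insert z Z', ?_, ?_, ?_, ?_, ?_, ?_⟩
        · refine Finset.insert_subset ?_ hZR
          rw [hRdef]
          exact Finset.mem_biUnion.mpr ⟨n, Finset.mem_range.mpr hnM, hzRf⟩
        · rw [Finset.disjoint_insert_left]
          constructor
          · simp only [Finset.mem_union]
            rintro (h | h)
            · exact hzGH h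
            · exact hzT h
          · exact Finset.disjoint_of_subset_right
              (Finset.union_subset_union_right (Finset.subset_insert _ _)) hZdisj
        · rw [hXeq]; exact hzind
        · rw [hXeq, Finset.card_insert_of_notMem hzE, Finset.card_erase_of_mem hgX']
          have h1 : 1 ≤ X'.card := Finset.card_pos.mpr ⟨g, hgX'⟩
          omega
        · rw [Finset.sum_insert hzZ', hsd, Finset.sum_insert hgnot]
          linarith
        · rw [Finset.sum_insert hzZ', hsd, Finset.sum_insert hgnot, mul_add]
          linarith
    obtain ⟨Z, hZR, hZdisj, hZind, hZcard, hZcost, hZprof⟩ :=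
      key ((G ∩ Hs).card) ∅ (Finset.empty_subset _) (by simp)
    rw [Finset.union_empty] at hZind hZcard hZdisj
    rw [Finset.sdiff_empty] at hZcost hZprof
    have hdisj2 : Disjoint (G \ Hs) Z := hZdisj.symm
    refine ⟨Z, hZR, ⟨⟨hZind, ?_⟩, ?_, ?_, ?_⟩⟩
    · rw [hZcard]; exact hG.2
    · exact hZcost
    · rw [Finset.sum_union hdisj2]
      have hsplit : ∑ e ∈ G ∩ Hs, K.profit e + ∑ e ∈ G \ Hs, K.profit e
          = ∑ e ∈ G, K.profit e := Finset.sum_inter_add_sum_sdiff G Hs K.profit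
      have hnn : 0 ≤ ∑ e ∈ G \ Hs, K.profit e :=
        Finset.sum_nonneg (fun e _ => K.profit_nonneg e)
      nlinarith
    · have hc1 : (G \ Hs).card + Z.card = G.card := by
        rw [← Finset.card_union_of_disjoint hdisj2, hZcard]
      have hc2 : (G ∩ Hs).card + (G \ Hs).card = G.card :=
        Finset.card_inter_add_card_sdiff G Hs
      rw [← hHs]
      omega
  · -- cardinality bound
    have h1 : R.card ≤ M * N := by
      calc R.card ≤ ∑ n ∈ Finset.range M, (Rf n).card := Finset.card_biUnion_le
        _ ≤ ∑ _n ∈ Finset.range M, N := Finset.sum_le_sum (fun n _ => hR4 n)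
        _ = M * N := by simp [Finset.sum_const, Finset.card_range]
    have hNq : (N:ℝ) ≤ qe ε := Nat.floor_le (Real.rpow_nonneg (le_of_lt hε) _)
    have hMq : (M:ℝ) ≤ L + 1 := le_of_lt (Nat.ceil_lt_add_one (le_of_lt hL))
    calc (R.card : ℝ) ≤ (M:ℝ) * (N:ℝ) := by exact_mod_cast h1
      _ ≤ (L + 1) * qe ε :=
        mul_le_mul hMq hNq (Nat.cast_nonneg N) (by linarith)
      _ = qe ε * (L + 1) := mul_comm _ _
end

section
/- Let M = (E, I) be a matroid on a finite ground set E, let A, B ∈ I be independent sets, and let a ∈ A \ B be such that B ∪ {a} ∉ I. Then there exists b ∈ B \ A such that (A \ {a}) ∪ {b} ∈ I. -/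
/-- **generalized exchange property.** If `A, B` are independent and
`a ∈ A \ B` satisfies `B ∪ {a} ∉ I`, then there is `b ∈ B \ A` with
`(A \ {a}) ∪ {b}` independent. -/
theorem generalized_exchange {E : Type} [Fintype E] [DecidableEq E]
    (M : FinMatroid E) (A B : Finset E) (hA : M.Indep A) (hB : M.Indep B)
    (a : E) (ha : a ∈ A \ B) (hBa : ¬ M.Indep (insert a B)) :
    ∃ b ∈ B \ A, M.Indep (insert b (A.erase a)) := by
  obtain ⟨haA, haB⟩ := Finset.mem_sdiff.mp ha
  have key : ∀ n (C : Finset E), M.Indep C → B ⊆ C → C ⊆ A ∪ B → a ∉ C →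
      A.card ≤ C.card + n →
      ∃ C', M.Indep C' ∧ C' ⊆ A ∪ B ∧ a ∉ C' ∧ A.card ≤ C'.card := by
    intro n
    induction n with
    | zero => intro C h1 h2 h3 h4 h5; exact ⟨C, h1, h3, h4, by omega⟩
    | succ n ih =>
      intro C h1 h2 h3 h4 h5
      by_cases hlt : C.card < A.card
      · obtain ⟨e, he, hind⟩ := M.indep_exchange hA h1 hlt
        obtain ⟨heA, heC⟩ := Finset.mem_sdiff.mp he
        have hea : e ≠ a := by
          rintro rfl
          exact hBa (M.indep_subset hind (Finset.insert_subset_insert _ h2))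
        refine ih (insert e C) hind (h2.trans (Finset.subset_insert _ _))
          (Finset.insert_subset (Finset.mem_union_left _ heA) h3) ?_ ?_
        · simp only [Finset.mem_insert]
          rintro (h | h)
          · exact hea h.symm
          · exact h4 h
        · rw [Finset.card_insert_of_notMem heC]; omega
      · exact ⟨C, h1, h3, h4, by omega⟩
  obtain ⟨C, hC, hCsub, haC, hcard⟩ :=
    key A.card B hB subset_rfl Finset.subset_union_right haB (by omega)
  have hA' : M.Indep (A.erase a) := M.indep_subset hA (Finset.erase_subset _ _)
  have hApos : 0 < A.card := Finset.card_pos.mpr ⟨a, haA⟩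
  have hcard' : (A.erase a).card < C.card := by
    rw [Finset.card_erase_of_mem haA]; omega
  obtain ⟨e, he, hind⟩ := M.indep_exchange hC hA' hcard'
  obtain ⟨heC, heA'⟩ := Finset.mem_sdiff.mp he
  have hea : e ≠ a := fun h => haC (h ▸ heC)
  have heA : e ∉ A := fun h => heA' (Finset.mem_erase.mpr ⟨hea, h⟩)
  have heB : e ∈ B := (Finset.mem_union.mp (hCsub heC)).resolve_left heA
  exact ⟨e, Finset.mem_sdiff.mpr ⟨heB, heA⟩, hind⟩
end

section
/- Let M = (E, I) be a matroid on a finite ground set E, let w : E → ℝ≥0 be a weight function, and let B be a minimum basis of M with respect to w. Then for every a ∈ E \ B it holds that {e ∈ B : w(e) ≤ w(a)} ∪ {a} ∉ I. -/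
open Finset
open scoped Classical

/-- A basis of a matroid: an independent set that is inclusion-maximal. -/
def FinMatroid.IsBasis {E : Type} [Fintype E] [DecidableEq E]
    (M : FinMatroid E) (B : Finset E) : Prop :=
  M.Indep B ∧ ∀ e : E, e ∉ B → ¬ M.Indep (insert e B)

/-- A minimum basis with respect to a weight function `w`. -/
def FinMatroid.IsMinBasis {E : Type} [Fintype E] [DecidableEq E]
    (M : FinMatroid E) (w : E → ℝ) (B : Finset E) : Prop :=
  M.IsBasis B ∧ ∀ A : Finset E, M.IsBasis A → ∑ e ∈ B, w e ≤ ∑ e ∈ A, w e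

lemma indep_card_le_basis {E : Type} [Fintype E] [DecidableEq E]
    (M : FinMatroid E) {B S : Finset E} (hB : M.IsBasis B) (hS : M.Indep S) :
    S.card ≤ B.card := by
  by_contra h
  push_neg at h
  obtain ⟨e, he, hind⟩ := M.indep_exchange hS hB.1 h
  exact hB.2 e (Finset.mem_sdiff.mp he).2 hind

lemma grow_indep {E : Type} [Fintype E] [DecidableEq E]
    (M : FinMatroid E) {B : Finset E} (hB : M.Indep B) :
    ∀ n (S : Finset E), B.card - S.card = n → M.Indep S → S.card ≤ B.card →
      ∃ T, S ⊆ T ∧ T ⊆ S ∪ B ∧ M.Indep T ∧ T.card = B.card := by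
  intro n
  induction n with
  | zero =>
    intro S h0 hS hle
    exact ⟨S, subset_rfl, Finset.subset_union_left, hS, le_antisymm hle (Nat.le_of_sub_eq_zero h0)⟩
  | succ n ih =>
    intro S hn hS hle
    have hlt : S.card < B.card := by omega
    obtain ⟨e, he, hind⟩ := M.indep_exchange hB hS hlt
    rw [Finset.mem_sdiff] at he
    have hcard : (insert e S).card = S.card + 1 := Finset.card_insert_of_notMem he.2
    obtain ⟨T, h1, h2, h3, h4⟩ := ih (insert e S) (by omega) hind (by omega)
    refine ⟨T, (Finset.subset_insert _ _).trans h1, ?_, h3, h4⟩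
    intro x hx
    rcases Finset.mem_union.mp (h2 hx) with hx | hx
    · rcases Finset.mem_insert.mp hx with rfl | hx
      · exact Finset.mem_union_right _ he.1
      · exact Finset.mem_union_left _ hx
    · exact Finset.mem_union_right _ hx

/-- Let `B` be a minimum basis of a matroid `M` with respect to a
nonnegative weight function `w`. Then for every `a ∈ E \ B`,
`{e ∈ B : w e ≤ w a} ∪ {a}` is not independent. -/
theorem min_basis_filter_insert_not_indep {E : Type} [Fintype E] [DecidableEq E]
    (M : FinMatroid E) (w : E → ℝ) (hw : ∀ e, 0 ≤ w e) (B : Finset E)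
    (hB : M.IsMinBasis w B) (a : E) (ha : a ∉ B) :
    ¬ M.Indep (insert a (B.filter (fun e => w e ≤ w a))) := by
  intro hS
  set S := insert a (B.filter (fun e => w e ≤ w a)) with hSdef
  have haS : a ∈ S := Finset.mem_insert_self _ _
  have hScard : S.card ≤ B.card := indep_card_le_basis M hB.1 hS
  obtain ⟨T, hST, hTS, hTind, hTcard⟩ :=
    grow_indep M hB.1.1 (B.card - S.card) S rfl hS hScard
  -- T is a basis
  have hTbasis : M.IsBasis T := by
    refine ⟨hTind, fun e he hind => ?_⟩
    have := indep_card_le_basis M hB.1 hind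
    rw [Finset.card_insert_of_notMem he, hTcard] at this
    omega
  have haT : a ∈ T := hST haS
  have hTsub : T ⊆ insert a B := by
    intro x hx
    rcases Finset.mem_union.mp (hTS hx) with hx | hx
    · rcases Finset.mem_insert.mp hx with rfl | hx
      · exact Finset.mem_insert_self _ _
      · exact Finset.mem_insert_of_mem (Finset.mem_filter.mp hx).1
    · exact Finset.mem_insert_of_mem hx
  have herase : T.erase a ⊆ B := by
    intro x hx
    rcases Finset.mem_insert.mp (hTsub (Finset.mem_of_mem_erase hx)) with rfl | h
    · exact absurd rfl (Finset.ne_of_mem_erase hx)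
    · exact h
  have hTe : T = insert a (T.erase a) := (Finset.insert_erase haT).symm
  have hecard : (T.erase a).card = B.card - 1 := by
    rw [Finset.card_erase_of_mem haT, hTcard]
  have hBpos : 1 ≤ B.card := by
    have := Finset.card_pos.mpr ⟨a, haT⟩
    omega
  have hsd : (B \ T.erase a).card = 1 := by
    rw [Finset.card_sdiff_of_subset herase, hecard]
    omega
  obtain ⟨b, hb⟩ := Finset.card_eq_one.mp hsd
  have hbB : b ∈ B ∧ b ∉ T.erase a := by
    have : b ∈ B \ T.erase a := hb ▸ Finset.mem_singleton_self b
    exact Finset.mem_sdiff.mp this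
  have hbT : b ∉ T := by
    intro h
    exact hbB.2 (Finset.mem_erase.mpr ⟨fun h' => ha (h' ▸ hbB.1), h⟩)
  have hwab : w a < w b := by
    by_contra h
    push_neg at h
    exact hbT (hST (Finset.mem_insert_of_mem (Finset.mem_filter.mpr ⟨hbB.1, h⟩)))
  -- sums
  have hsumT : ∑ e ∈ T, w e = w a + ∑ e ∈ T.erase a, w e :=
    (Finset.add_sum_erase T w haT).symm
  have hsumB : ∑ e ∈ B, w e = w b + ∑ e ∈ T.erase a, w e := by
    rw [← Finset.sum_sdiff herase, hb, Finset.sum_singleton]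
  have hmin := hB.2 T hTbasis
  rw [hsumT, hsumB] at hmin
  linarith
end

section
/- Let K = (E, I, c, p, β) be a BMI instance, 0 < ε < 1/2, and let α satisfy OPT(K)/2 ≤ α ≤ OPT(K). Let R ⊆ ⋃_{r∈[log_{1−ε}(ε/2)+1]} C_r(α) be a set such that for every r ∈ [log_{1−ε}(ε/2)+1], R ∩ C_r(α) is a minimum basis with respect to c of the matroid [(E, I) ∩ C_r(α)]_{≤q(ε)}. Then for every G ∈ I_{≤q(ε)} there exists a substitution Z_G of G with Z_G ⊆ R. -/
open Finset
open scoped Classical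

variable {E : Type} [Fintype E] [DecidableEq E]

/-- The number of profit classes, `⌊log_{1-ε}(ε/2) + 1⌋`. -/
noncomputable def numClasses (ε : ℝ) : ℕ := ⌊Real.logb (1 - ε) (ε/2) + 1⌋₊

/-- The `r`-th profit class
`C_r(α) = {e ∈ E : (1-ε)^r < p(e)/(2α) ≤ (1-ε)^{r-1}}`. -/
noncomputable def BMI.profitClass (K : BMI E) (ε α : ℝ) (r : ℕ) : Finset E :=
  univ.filter (fun e =>
    (1 - ε)^r < K.profit e / (2*α) ∧ K.profit e / (2*α) ≤ (1 - ε)^(r-1))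

/-- Independent sets of the matroid `[(E, I) ∩ C_r(α)]_{≤ q(ε)}` on the ground set
`C_r(α)`: the sets `A ⊆ C_r(α)` with `A ∈ I` and `|A| ≤ q(ε)`. -/
noncomputable def BMI.classIndep (K : BMI E) (ε α : ℝ) (r : ℕ) (A : Finset E) : Prop :=
  A ⊆ K.profitClass ε α r ∧ K.Indep A ∧ (A.card : ℝ) ≤ qe ε

/-- `B` is a basis of the independence system `Indep` on ground set `ground`:
an inclusion-maximal independent subset of the ground set. -/
def IsBasisOf (Indep : Finset E → Prop) (ground : Finset E) (B : Finset E) : Prop :=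
  B ⊆ ground ∧ Indep B ∧ ∀ e ∈ ground, e ∉ B → ¬ Indep (insert e B)

/-- `B` is a minimum basis of `Indep` on `ground` with respect to weights `w`. -/
def IsMinBasisOf (Indep : Finset E → Prop) (ground : Finset E) (w : E → ℝ)
    (B : Finset E) : Prop :=
  IsBasisOf Indep ground B ∧
    ∀ A : Finset E, IsBasisOf Indep ground A → ∑ e ∈ B, w e ≤ ∑ e ∈ A, w e

/-- `Z` is a substitution of `G` (Definition 4.7): `Z` is contained in the union of
the profit classes, `(G \ H) ∪ Z ∈ I_{≤ q(ε)}`, `c(Z) ≤ c(G ∩ H)`,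
`|C_r(α) ∩ Z| = |C_r(α) ∩ G ∩ H|` for every class `r`, and `(G \ H) ∩ Z = ∅`. -/
noncomputable def BMI.IsSubstitution (K : BMI E) (ε α : ℝ) (G Z : Finset E) : Prop :=
  Z ⊆ (Finset.Icc 1 (numClasses ε)).biUnion (K.profitClass ε α) ∧
  K.IndepLe ε ((G \ K.H ε) ∪ Z) ∧
  ∑ e ∈ Z, K.cost e ≤ ∑ e ∈ G ∩ K.H ε, K.cost e ∧
  (∀ r ∈ Finset.Icc 1 (numClasses ε),
    (K.profitClass ε α r ∩ Z).card = (K.profitClass ε α r ∩ G ∩ K.H ε).card) ∧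
  (G \ K.H ε) ∩ Z = ∅

set_option linter.unusedSectionVars false

lemma exists_maximal_superset {Ind : Finset E → Prop} {T U : Finset E}
    (hTU : T ⊆ U) (hT : Ind T) :
    ∃ X : Finset E, T ⊆ X ∧ X ⊆ U ∧ Ind X ∧ ∀ e ∈ U, e ∉ X → ¬ Ind (insert e X) := by
  classical
  obtain ⟨X, hX, hmax⟩ := Finset.exists_max_image
    (U.powerset.filter fun X => T ⊆ X ∧ Ind X) Finset.card
    ⟨T, by simp [hTU, hT]⟩
  simp only [Finset.mem_filter, Finset.mem_powerset] at hX
  refine ⟨X, hX.2.1, hX.1, hX.2.2, ?_⟩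
  intro e heU heX hind
  have h2 : insert e X ∈ U.powerset.filter fun Y => T ⊆ Y ∧ Ind Y := by
    simp only [Finset.mem_filter, Finset.mem_powerset]
    exact ⟨Finset.insert_subset heU hX.1, hX.2.1.trans (Finset.subset_insert _ _), hind⟩
  have := hmax _ h2
  rw [Finset.card_insert_of_notMem heX] at this
  omega

lemma card_le_of_maximal {Ind : Finset E → Prop}
    (hex : ∀ ⦃A B : Finset E⦄, Ind A → Ind B → B.card < A.card →
      ∃ e ∈ A \ B, Ind (insert e B))
    {X U J : Finset E} (hX : Ind X)
    (hmax : ∀ e ∈ U, e ∉ X → ¬ Ind (insert e X)) (hJU : J ⊆ U) (hJ : Ind J) :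
    J.card ≤ X.card := by
  by_contra h
  push_neg at h
  obtain ⟨e, he, hind⟩ := hex hJ hX h
  rw [Finset.mem_sdiff] at he
  exact hmax e (hJU he.1) he.2 hind

lemma exists_grow {Ind : Finset E → Prop}
    (hex : ∀ ⦃A B : Finset E⦄, Ind A → Ind B → B.card < A.card →
      ∃ e ∈ A \ B, Ind (insert e B)) :
    ∀ n : ℕ, ∀ Y : Finset E, Ind Y → ∀ {B : Finset E}, Ind B → B.card = Y.card + n →
      ∃ X : Finset E, Y ⊆ X ∧ X ⊆ Y ∪ B ∧ Ind X ∧ X.card = B.card := by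
  intro n
  induction n with
  | zero =>
    intro Y hY B hB hc
    exact ⟨Y, Finset.Subset.refl _, Finset.subset_union_left, hY, hc.symm⟩
  | succ n ih =>
    intro Y hY B hB hc
    obtain ⟨e, he, hind⟩ := hex hB hY (by omega)
    rw [Finset.mem_sdiff] at he
    obtain ⟨X, h1, h2, h3, h4⟩ := ih (insert e Y) hind hB
      (by rw [Finset.card_insert_of_notMem he.2]; omega)
    refine ⟨X, (Finset.subset_insert _ _).trans h1, ?_, h3, h4⟩
    refine h2.trans ?_
    intro x hx
    rcases Finset.mem_union.1 hx with hx | hx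
    · rcases Finset.mem_insert.1 hx with rfl | hx
      · exact Finset.mem_union_right _ he.1
      · exact Finset.mem_union_left _ hx
    · exact Finset.mem_union_right _ hx

lemma classIndep_subset (K : BMI E) {ε α : ℝ} {r : ℕ} {A B : Finset E}
    (hA : K.classIndep ε α r A) (hBA : B ⊆ A) : K.classIndep ε α r B :=
  ⟨hBA.trans hA.1, K.indep_subset hA.2.1 hBA,
    le_trans (Nat.cast_le.2 (Finset.card_le_card hBA)) hA.2.2⟩

lemma classIndep_exchange (K : BMI E) {ε α : ℝ} {r : ℕ} :
    ∀ ⦃A B : Finset E⦄, K.classIndep ε α r A → K.classIndep ε α r B → B.card < A.card →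
      ∃ e ∈ A \ B, K.classIndep ε α r (insert e B) := by
  intro A B hA hB hcard
  obtain ⟨e, he, hind⟩ := K.indep_exchange hA.2.1 hB.2.1 hcard
  have he' := Finset.mem_sdiff.1 he
  refine ⟨e, he, Finset.insert_subset (hA.1 he'.1) hB.1, hind, ?_⟩
  rw [Finset.card_insert_of_notMem he'.2]
  have h1 : (B.card : ℝ) + 1 ≤ A.card := by exact_mod_cast hcard
  push_cast
  linarith [hA.2.2]

lemma minbasis_card_bound (K : BMI E) {ε α : ℝ} {r : ℕ} {B : Finset E}
    (hB : IsMinBasisOf (K.classIndep ε α r) (K.profitClass ε α r) K.cost B)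
    (t : ℝ) {J : Finset E} (hJ : K.classIndep ε α r J)
    (hJt : ∀ e ∈ J, K.cost e ≤ t) :
    J.card ≤ (B.filter fun e => K.cost e ≤ t).card := by
  classical
  obtain ⟨⟨hBsub, hBind, hBmax⟩, hBmin⟩ := hB
  by_contra hcon
  push_neg at hcon
  set T := B.filter fun e => K.cost e ≤ t with hTdef
  have hTB : T ⊆ B := Finset.filter_subset _ _
  have hTind : K.classIndep ε α r T := classIndep_subset K hBind hTB
  obtain ⟨e, he, heind⟩ := classIndep_exchange K hJ hTind hcon
  rw [Finset.mem_sdiff] at he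
  have heB : e ∉ B := fun hmem => he.2 (Finset.mem_filter.2 ⟨hmem, hJt e he.1⟩)
  have hJB : J.card ≤ B.card :=
    card_le_of_maximal (classIndep_exchange K) hBind hBmax hJ.1 hJ
  have heT : e ∉ T := he.2
  have hcard1 : (insert e T).card = T.card + 1 := Finset.card_insert_of_notMem heT
  obtain ⟨X, hX1, hX2, hX3, hX4⟩ := exists_grow (Ind := K.classIndep ε α r)
    (classIndep_exchange K) (B.card - (insert e T).card) (insert e T) heind hBind
    (by
      have hTc : T.card < J.card := hcon
      omega)
  have hXsub : X ⊆ insert e B := by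
    refine hX2.trans ?_
    rw [Finset.insert_union, Finset.union_eq_right.2 hTB]
  have heX : e ∈ X := hX1 (Finset.mem_insert_self _ _)
  have hXe_sub : X.erase e ⊆ B := by
    intro x hx
    have hx' := Finset.mem_erase.1 hx
    rcases Finset.mem_insert.1 (hXsub hx'.2) with h | h
    · exact absurd h hx'.1
    · exact h
  have hXecard : (X.erase e).card = B.card - 1 := by
    rw [Finset.card_erase_of_mem heX, hX4]
  have hBpos : 1 ≤ B.card := by
    have := Finset.card_le_card hXe_sub
    have h1 : 1 ≤ X.card := Finset.card_pos.2 ⟨e, heX⟩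
    omega
  have hgex : ∃ g, g ∈ B \ X.erase e := by
    have : (B \ X.erase e).card = 1 := by
      rw [Finset.card_sdiff_of_subset hXe_sub, hXecard]
      omega
    obtain ⟨g, hg⟩ := Finset.card_pos.1 (by omega : 0 < (B \ X.erase e).card)
    exact ⟨g, hg⟩
  obtain ⟨g, hg⟩ := hgex
  rw [Finset.mem_sdiff] at hg
  have hXerase_eq : X.erase e = B.erase g := by
    apply Finset.eq_of_subset_of_card_le
    · intro x hx
      exact Finset.mem_erase.2 ⟨fun h => hg.2 (h ▸ hx), hXe_sub hx⟩
    · rw [Finset.card_erase_of_mem hg.1, hXecard]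
  have hXeq : X = insert e (B.erase g) := by
    rw [← hXerase_eq, Finset.insert_erase heX]
  have hgT : g ∉ T := by
    intro hgT
    have : g ∈ X := hX1 (Finset.mem_insert_of_mem hgT)
    have hge : g ≠ e := fun h => heB (h ▸ hg.1)
    exact hg.2 (Finset.mem_erase.2 ⟨hge, this⟩)
  have hgcost : t < K.cost g := by
    by_contra h
    push_neg at h
    exact hgT (Finset.mem_filter.2 ⟨hg.1, h⟩)
  have hXbasis : IsBasisOf (K.classIndep ε α r) (K.profitClass ε α r) X := by
    refine ⟨hX3.1, hX3, ?_⟩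
    intro h' hh'C hh'X hind2
    have hcard2 : B.card < (insert h' X).card := by
      rw [Finset.card_insert_of_notMem hh'X, hX4]
      omega
    obtain ⟨f, hf, hfind⟩ := classIndep_exchange K hind2 hBind hcard2
    rw [Finset.mem_sdiff] at hf
    have hfC : f ∈ K.profitClass ε α r := hind2.1 hf.1
    exact hBmax f hfC hf.2 hfind
  have hmin := hBmin X hXbasis
  have hsum : ∑ x ∈ X, K.cost x = K.cost e + (∑ x ∈ B, K.cost x - K.cost g) := by
    rw [hXeq, Finset.sum_insert (fun h => heB (Finset.mem_of_mem_erase h))]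
    have := Finset.sum_erase_add B K.cost hg.1
    linarith
  have hce : K.cost e ≤ t := hJt e he.1
  linarith

lemma exchange_step (K : BMI E) {ε α : ℝ} {r : ℕ} {B S : Finset E}
    (hB : IsMinBasisOf (K.classIndep ε α r) (K.profitClass ε α r) K.cost B)
    {a : E} (haS : a ∈ S) (haC : a ∈ K.profitClass ε α r)
    (hS : K.Indep S) (hScard : (S.card : ℝ) ≤ qe ε) :
    ∃ b ∈ B, K.cost b ≤ K.cost a ∧ b ∉ S.erase a ∧ K.Indep (insert b (S.erase a)) := by
  classical
  obtain ⟨⟨hBsub, hBind, hBmax⟩, hBmin⟩ := hB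
  by_cases haB : a ∈ B
  · exact ⟨a, haB, le_refl _, Finset.notMem_erase _ _,
      by rw [Finset.insert_erase haS]; exact hS⟩
  set T := B.filter fun e => K.cost e ≤ K.cost a with hTdef
  have hTB : T ⊆ B := Finset.filter_subset _ _
  have haT : a ∉ T := fun h => haB (hTB h)
  have hTind : K.Indep T := K.indep_subset hBind.2.1 hTB
  have hS'ind : K.Indep (S.erase a) := K.indep_subset hS (Finset.erase_subset _ _)
  by_cases hTa : K.Indep (insert a T)
  · by_cases hq : ((T.card + 1 : ℕ) : ℝ) ≤ qe ε
    · exfalso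
      have hJ : K.classIndep ε α r (insert a T) := by
        refine ⟨Finset.insert_subset haC (hTB.trans hBsub), hTa, ?_⟩
        rw [Finset.card_insert_of_notMem haT]
        exact hq
      have := minbasis_card_bound K ⟨⟨hBsub, hBind, hBmax⟩, hBmin⟩ (K.cost a) hJ
        (by
          intro x hx
          rcases Finset.mem_insert.1 hx with rfl | hx
          · exact le_refl _
          · exact (Finset.mem_filter.1 hx).2)
      rw [Finset.card_insert_of_notMem haT, ← hTdef] at this
      omega
    · push_neg at hq
      have hST : S.card ≤ T.card := by
        have : (S.card : ℝ) < ((T.card + 1 : ℕ) : ℝ) := lt_of_le_of_lt hScard hq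
        exact_mod_cast Nat.lt_succ_iff.1 (by exact_mod_cast this)
      have hcard : (S.erase a).card < T.card := by
        rw [Finset.card_erase_of_mem haS]
        have : 1 ≤ S.card := Finset.card_pos.2 ⟨a, haS⟩
        omega
      obtain ⟨b, hb, hbind⟩ := K.indep_exchange hTind hS'ind hcard
      rw [Finset.mem_sdiff] at hb
      have hbT := Finset.mem_filter.1 hb.1
      exact ⟨b, hbT.1, hbT.2, hb.2, hbind⟩
  · by_contra hcon
    push_neg at hcon
    have key : ∀ b ∈ T, b ∉ S.erase a → ¬ K.Indep (insert b (S.erase a)) := by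
      intro b hbT hbS
      have hbT' := Finset.mem_filter.1 hbT
      exact hcon b hbT'.1 hbT'.2 hbS
    have hTU : T ⊆ S ∪ T := Finset.subset_union_right
    obtain ⟨X, hX1, hX2, hX3, hX4⟩ := exists_maximal_superset hTU hTind
    have haX : a ∉ X := by
      intro haX
      exact hTa (K.indep_subset hX3 (Finset.insert_subset haX hX1))
    have hXsub : X ⊆ S.erase a ∪ T := by
      intro x hx
      rcases Finset.mem_union.1 (hX2 hx) with h | h
      · exact Finset.mem_union_left _
          (Finset.mem_erase.2 ⟨fun heq => haX (heq ▸ hx), h⟩)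
      · exact Finset.mem_union_right _ h
    have hspan : ∀ x ∈ S.erase a ∪ T, x ∉ S.erase a → ¬ K.Indep (insert x (S.erase a)) := by
      intro x hx hxS
      rcases Finset.mem_union.1 hx with h | h
      · exact absurd h hxS
      · exact key x h hxS
    have hXcard : X.card ≤ (S.erase a).card :=
      card_le_of_maximal K.indep_exchange hS'ind hspan hXsub hX3
    have hScard2 : S.card ≤ X.card :=
      card_le_of_maximal K.indep_exchange hX3 hX4 Finset.subset_union_left hS
    have h1 : 1 ≤ S.card := Finset.card_pos.2 ⟨a, haS⟩
    rw [Finset.card_erase_of_mem haS] at hXcard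
    omega

lemma class_replace (K : BMI E) {ε α : ℝ} {r : ℕ} {B : Finset E}
    (hB : IsMinBasisOf (K.classIndep ε α r) (K.profitClass ε α r) K.cost B) :
    ∀ n : ℕ, ∀ S A : Finset E, A.card = n → K.Indep S → (S.card : ℝ) ≤ qe ε →
      A ⊆ S → A ⊆ K.profitClass ε α r →
      ∃ Z : Finset E, Z ⊆ B ∧ Z.card = A.card ∧
        (∑ e ∈ Z, K.cost e) ≤ ∑ e ∈ A, K.cost e ∧
        K.Indep ((S \ A) ∪ Z) ∧ Z ∩ (S \ A) = ∅ ∧ ((S \ A) ∪ Z).card = S.card := by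
  intro n
  induction n with
  | zero =>
    intro S A hAcard hS hScard hAS hAC
    rw [Finset.card_eq_zero] at hAcard
    subst hAcard
    exact ⟨∅, Finset.empty_subset _, rfl, le_refl _, by simpa using hS, by simp, by simp⟩
  | succ n ih =>
    intro S A hAcard hS hScard hAS hAC
    obtain ⟨a, haA⟩ := Finset.card_pos.1 (by omega : 0 < A.card)
    have haS : a ∈ S := hAS haA
    obtain ⟨b, hbB, hbcost, hbS, hbind⟩ :=
      exchange_step K hB haS (hAC haA) hS hScard
    set S₁ := insert b (S.erase a) with hS₁def
    set A₁ := A.erase a with hA₁def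
    have hScard1 : 1 ≤ S.card := Finset.card_pos.2 ⟨a, haS⟩
    have hS₁card : S₁.card = S.card := by
      rw [hS₁def, Finset.card_insert_of_notMem hbS, Finset.card_erase_of_mem haS]
      omega
    have hA₁S₁ : A₁ ⊆ S₁ :=
      (Finset.erase_subset_erase a hAS).trans (Finset.subset_insert _ _)
    have hA₁C : A₁ ⊆ K.profitClass ε α r := (Finset.erase_subset _ _).trans hAC
    have hA₁card : A₁.card = n := by
      rw [hA₁def, Finset.card_erase_of_mem haA]; omega
    obtain ⟨Z₁, hZ₁B, hZ₁card, hZ₁cost, hZ₁ind, hZ₁disj, hZ₁cardeq⟩ :=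
      ih S₁ A₁ hA₁card hbind (by rw [hS₁card]; exact hScard) hA₁S₁ hA₁C
    have hkey : S₁ \ A₁ = insert b (S \ A) := by
      ext x
      simp only [hS₁def, hA₁def, Finset.mem_sdiff, Finset.mem_insert, Finset.mem_erase]
      constructor
      · rintro ⟨hx1, hx2⟩
        rcases hx1 with rfl | ⟨hxa, hxS⟩
        · exact Or.inl rfl
        · exact Or.inr ⟨hxS, fun hxA => hx2 ⟨hxa, hxA⟩⟩
      · rintro (rfl | ⟨hxS, hxA⟩)
        · exact ⟨Or.inl rfl, fun h => hbS (Finset.mem_erase.2 ⟨h.1, hAS h.2⟩)⟩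
        · exact ⟨Or.inr ⟨fun h => hxA (h ▸ haA), hxS⟩, fun h => hxA h.2⟩
    have hbS₁A₁ : b ∈ S₁ \ A₁ := by
      rw [hkey]; exact Finset.mem_insert_self _ _
    have hbZ₁ : b ∉ Z₁ := by
      intro h
      have : b ∈ Z₁ ∩ (S₁ \ A₁) := Finset.mem_inter.2 ⟨h, hbS₁A₁⟩
      rw [hZ₁disj] at this
      exact Finset.notMem_empty _ this
    refine ⟨insert b Z₁, Finset.insert_subset hbB hZ₁B, ?_, ?_, ?_, ?_, ?_⟩
    · rw [Finset.card_insert_of_notMem hbZ₁, hZ₁card, hA₁card]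
      omega
    · rw [Finset.sum_insert hbZ₁]
      have h2 := Finset.sum_erase_add A K.cost haA
      linarith
    · have hun : (S \ A) ∪ insert b Z₁ = (S₁ \ A₁) ∪ Z₁ := by
        rw [Finset.union_insert, ← Finset.insert_union, ← hkey]
      rw [hun]
      exact hZ₁ind
    · rw [Finset.eq_empty_iff_forall_notMem]
      intro x hx
      rw [Finset.mem_inter] at hx
      rcases Finset.mem_insert.1 hx.1 with rfl | hxZ₁
      · have hx' := Finset.mem_sdiff.1 hx.2
        have : x = a := by
          by_contra hne
          exact hbS (Finset.mem_erase.2 ⟨hne, hx'.1⟩)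
        exact hx'.2 (this ▸ haA)
      · have : x ∈ S₁ \ A₁ := by
          rw [hkey]
          exact Finset.mem_insert_of_mem hx.2
        have hmem : x ∈ Z₁ ∩ (S₁ \ A₁) := Finset.mem_inter.2 ⟨hxZ₁, this⟩
        rw [hZ₁disj] at hmem
        exact Finset.notMem_empty _ hmem
    · have hun : (S \ A) ∪ insert b Z₁ = (S₁ \ A₁) ∪ Z₁ := by
        rw [Finset.union_insert, ← Finset.insert_union, ← hkey]
      rw [hun, hZ₁cardeq, hS₁card]

lemma BMI.opt_mem_bdd (K : BMI E) :
    BddAbove {v : ℝ | ∃ X : Finset E, K.IsSolution X ∧ v = ∑ e ∈ X, K.profit e} := by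
  apply Set.Finite.bddAbove
  apply Set.Finite.subset (Set.finite_range (fun X : Finset E => ∑ e ∈ X, K.profit e))
  rintro v ⟨X, _, rfl⟩
  exact ⟨X, rfl⟩

lemma BMI.profit_le_opt (K : BMI E) (e : E) : K.profit e ≤ K.opt := by
  apply le_csSup K.opt_mem_bdd
  exact ⟨{e}, ⟨K.indep_singleton e, by simpa using K.cost_le_budget e⟩, by simp⟩

lemma BMI.opt_nonneg_s11 (K : BMI E) : 0 ≤ K.opt := by
  apply le_csSup K.opt_mem_bdd
  exact ⟨∅, ⟨K.indep_empty, by simpa using K.budget_pos.le⟩, by simp⟩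

lemma mem_class_of_mem_H (K : BMI E) {ε α : ℝ} (hε : 0 < ε) (hε2 : ε < 1/2)
    (hα1 : K.opt / 2 ≤ α) (hα2 : α ≤ K.opt) {e : E} (he : e ∈ K.H ε) :
    ∃ r ∈ Finset.Icc 1 (numClasses ε), e ∈ K.profitClass ε α r := by
  classical
  have hpe : ε * K.opt < K.profit e := (Finset.mem_filter.1 he).2
  have hple : K.profit e ≤ K.opt := K.profit_le_opt e
  have hoptpos : 0 < K.opt := by nlinarith
  have hαpos : 0 < α := by linarith
  set x := K.profit e / (2 * α) with hxdef
  have hx1 : x ≤ 1 := by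
    rw [hxdef, div_le_one (by linarith)]
    linarith
  have hx2 : ε / 2 < x := by
    rw [hxdef, div_lt_div_iff₀ (by norm_num) (by linarith)]
    nlinarith
  have hb0 : (0:ℝ) < 1 - ε := by linarith
  have hb1 : (1:ℝ) - ε < 1 := by linarith
  set L := Real.logb (1 - ε) (ε / 2) with hLdef
  have hLN : L < (numClasses ε : ℝ) := by
    have h := Nat.lt_floor_add_one (L + 1)
    have : (numClasses ε : ℝ) = (⌊L + 1⌋₊ : ℝ) := by
      simp [numClasses, hLdef]
    linarith
  have hpowN : ((1:ℝ) - ε) ^ (numClasses ε) ≤ ε / 2 := by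
    have h1 : ((1:ℝ) - ε) ^ (numClasses ε) = (1 - ε) ^ ((numClasses ε : ℝ)) :=
      (Real.rpow_natCast _ _).symm
    have h2 : ((1:ℝ) - ε) ^ ((numClasses ε : ℝ)) ≤ (1 - ε) ^ L :=
      Real.rpow_le_rpow_of_exponent_ge hb0 hb1.le hLN.le
    have h3 : ((1:ℝ) - ε) ^ L = ε / 2 :=
      Real.rpow_logb hb0 (ne_of_lt hb1) (by linarith)
    rw [h1]
    linarith
  have hexN : ∃ r : ℕ, ((1:ℝ) - ε) ^ r < x := ⟨numClasses ε, lt_of_le_of_lt hpowN hx2⟩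
  set r := Nat.find hexN with hrdef
  have hr : ((1:ℝ) - ε) ^ r < x := Nat.find_spec hexN
  have hrle : r ≤ numClasses ε := Nat.find_le (lt_of_le_of_lt hpowN hx2)
  have hr0 : r ≠ 0 := by
    intro h
    rw [h, pow_zero] at hr
    linarith
  have hmin : ¬ ((1:ℝ) - ε) ^ (r - 1) < x := Nat.find_min hexN (by omega)
  refine ⟨r, Finset.mem_Icc.2 ⟨by omega, hrle⟩, ?_⟩
  exact Finset.mem_filter.2 ⟨Finset.mem_univ _, hr, not_lt.1 hmin⟩

lemma profitClass_disj (K : BMI E) {ε α : ℝ} (hε : 0 < ε) (hε2 : ε < 1/2)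
    {r r' : ℕ} (hne : r ≠ r') :
    K.profitClass ε α r ∩ K.profitClass ε α r' = ∅ := by
  wlog h : r < r' generalizing r r'
  · rw [Finset.inter_comm]
    exact this hne.symm (by omega)
  rw [Finset.eq_empty_iff_forall_notMem]
  intro e he
  rw [Finset.mem_inter] at he
  obtain ⟨h1, h2⟩ := he
  simp only [BMI.profitClass, Finset.mem_filter] at h1 h2
  have hle : ((1:ℝ) - ε) ^ (r' - 1) ≤ (1 - ε) ^ r :=
    pow_le_pow_of_le_one (by linarith) (by linarith) (by omega)
  linarith [h1.2.1, h2.2.2]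

lemma multi_replace (K : BMI E) {ε α : ℝ} (hε : 0 < ε) (hε2 : ε < 1/2)
    {R : Finset E}
    (hR : ∀ r ∈ Finset.Icc 1 (numClasses ε),
      IsMinBasisOf (K.classIndep ε α r) (K.profitClass ε α r) K.cost
        (R ∩ K.profitClass ε α r))
    (A : ℕ → Finset E) :
    ∀ rs : Finset ℕ, rs ⊆ Finset.Icc 1 (numClasses ε) →
      ∀ S : Finset E, K.Indep S → (S.card : ℝ) ≤ qe ε →
      (∀ r ∈ rs, A r ⊆ S ∧ A r ⊆ K.profitClass ε α r) →
      ∃ Z : Finset E, Z ⊆ R ∧ Z ⊆ rs.biUnion (K.profitClass ε α) ∧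
        K.Indep ((S \ rs.biUnion A) ∪ Z) ∧
        ((S \ rs.biUnion A) ∪ Z).card = S.card ∧
        (∑ e ∈ Z, K.cost e) ≤ ∑ e ∈ rs.biUnion A, K.cost e ∧
        (∀ r ∈ rs, (Z ∩ K.profitClass ε α r).card = (A r).card) ∧
        Z ∩ (S \ rs.biUnion A) = ∅ := by
  intro rs
  induction rs using Finset.induction_on with
  | empty =>
    intro _ S hS hScard _
    exact ⟨∅, Finset.empty_subset _, by simp, by simpa using hS, by simp, by simp,
      by simp, by simp⟩
  | @insert r rs' hrmem ih =>
    intro hsub S hS hScard hA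
    have hrIcc : r ∈ Finset.Icc 1 (numClasses ε) := hsub (Finset.mem_insert_self _ _)
    have hrs'sub : rs' ⊆ Finset.Icc 1 (numClasses ε) :=
      fun x hx => hsub (Finset.mem_insert_of_mem hx)
    obtain ⟨hArS, hArC⟩ := hA r (Finset.mem_insert_self _ _)
    obtain ⟨Zr, hZrB, hZrcard, hZrcost, hZrind, hZrdisj, hZrcardeq⟩ :=
      class_replace K (hR r hrIcc) (A r).card S (A r) rfl hS hScard hArS hArC
    have hZrR : Zr ⊆ R := hZrB.trans Finset.inter_subset_left
    have hZrC : Zr ⊆ K.profitClass ε α r := hZrB.trans Finset.inter_subset_right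
    set S₁ := (S \ A r) ∪ Zr with hS₁def
    have hS₁card : (S₁.card : ℝ) ≤ qe ε := by rw [hS₁def, hZrcardeq]; exact hScard
    have hdisjC : ∀ r' ∈ rs', ∀ x, x ∈ K.profitClass ε α r →
        x ∈ K.profitClass ε α r' → False := by
      intro r' hr' x h1 h2
      have hx : x ∈ K.profitClass ε α r ∩ K.profitClass ε α r' :=
        Finset.mem_inter.2 ⟨h1, h2⟩
      rw [profitClass_disj K hε hε2 (by rintro rfl; exact hrmem hr')] at hx
      exact Finset.notMem_empty _ hx
    have hAr' : ∀ r' ∈ rs', A r' ⊆ S₁ ∧ A r' ⊆ K.profitClass ε α r' := by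
      intro r' hr'
      obtain ⟨h1, h2⟩ := hA r' (Finset.mem_insert_of_mem hr')
      refine ⟨fun x hx => Finset.mem_union_left _ (Finset.mem_sdiff.2
        ⟨h1 hx, fun hxA => hdisjC r' hr' x (hArC hxA) (h2 hx)⟩), h2⟩
    obtain ⟨Z', hZ'R, hZ'C, hZ'ind, hZ'card, hZ'cost, hZ'counts, hZ'disj⟩ :=
      ih hrs'sub S₁ hZrind hS₁card hAr'
    have hbiU : (insert r rs').biUnion A = A r ∪ rs'.biUnion A :=
      Finset.biUnion_insert
    have hbiUC : (insert r rs').biUnion (K.profitClass ε α) =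
        K.profitClass ε α r ∪ rs'.biUnion (K.profitClass ε α) :=
      Finset.biUnion_insert
    have hZ'notC : ∀ x ∈ Z', x ∉ K.profitClass ε α r := by
      intro x hx hxC
      obtain ⟨r', hr', hxC'⟩ := Finset.mem_biUnion.1 (hZ'C hx)
      exact hdisjC r' hr' x hxC hxC'
    have hZrD' : ∀ x ∈ Zr, x ∉ rs'.biUnion A := by
      intro x hx hmem
      obtain ⟨r', hr', hxA⟩ := Finset.mem_biUnion.1 hmem
      exact hdisjC r' hr' x (hZrC hx) ((hA r' (Finset.mem_insert_of_mem hr')).2 hxA)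
    have hkey : S₁ \ rs'.biUnion A = (S \ (insert r rs').biUnion A) ∪ Zr := by
      ext x
      simp only [hS₁def, hbiU, Finset.mem_sdiff, Finset.mem_union]
      by_cases hxZ : x ∈ Zr
      · have := hZrD' x hxZ; tauto
      · tauto
    have hdisjZ : Disjoint Zr Z' := by
      rw [Finset.disjoint_left]
      intro x hx hx'
      exact hZ'notC x hx' (hZrC hx)
    have hdisjA : Disjoint (A r) (rs'.biUnion A) := by
      rw [Finset.disjoint_left]
      intro x hx hmem
      obtain ⟨r', hr', hxA⟩ := Finset.mem_biUnion.1 hmem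
      exact hdisjC r' hr' x (hArC hx) ((hA r' (Finset.mem_insert_of_mem hr')).2 hxA)
    have huni : (S₁ \ rs'.biUnion A) ∪ Z' = (S \ (insert r rs').biUnion A) ∪ (Zr ∪ Z') := by
      rw [hkey, Finset.union_assoc]
    refine ⟨Zr ∪ Z', Finset.union_subset hZrR hZ'R, ?_, ?_, ?_, ?_, ?_, ?_⟩
    · rw [hbiUC]
      exact Finset.union_subset
        (hZrC.trans Finset.subset_union_left)
        (hZ'C.trans Finset.subset_union_right)
    · rw [← huni]; exact hZ'ind
    · rw [← huni, hZ'card, hS₁def, hZrcardeq]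
    · rw [Finset.sum_union hdisjZ, hbiU, Finset.sum_union hdisjA]
      linarith
    · intro r'' hr''
      rcases Finset.mem_insert.1 hr'' with rfl | hr''
      · have h1 : (Zr ∪ Z') ∩ K.profitClass ε α r'' = Zr := by
          rw [Finset.union_inter_distrib_right]
          rw [Finset.inter_eq_left.2 hZrC]
          have h2 : Z' ∩ K.profitClass ε α r'' = ∅ := by
            rw [Finset.eq_empty_iff_forall_notMem]
            intro x hx
            rw [Finset.mem_inter] at hx
            exact hZ'notC x hx.1 hx.2
          rw [h2, Finset.union_empty]
        rw [h1, hZrcard]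
      · have h1 : (Zr ∪ Z') ∩ K.profitClass ε α r'' = Z' ∩ K.profitClass ε α r'' := by
          rw [Finset.union_inter_distrib_right]
          have h2 : Zr ∩ K.profitClass ε α r'' = ∅ := by
            rw [Finset.eq_empty_iff_forall_notMem]
            intro x hx
            rw [Finset.mem_inter] at hx
            exact hdisjC r'' hr'' x (hZrC hx.1) hx.2
          rw [h2, Finset.empty_union]
        rw [h1]
        exact hZ'counts r'' hr''
    · rw [Finset.eq_empty_iff_forall_notMem]
      intro x hx
      rw [Finset.mem_inter] at hx
      obtain ⟨hx1, hx2⟩ := hx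
      have hxfull : x ∈ S \ (insert r rs').biUnion A := hx2
      have hxS : x ∈ S := (Finset.mem_sdiff.1 hxfull).1
      have hxnA : x ∉ (insert r rs').biUnion A := (Finset.mem_sdiff.1 hxfull).2
      rcases Finset.mem_union.1 hx1 with hxZr | hxZ'
      · have hxSAr : x ∈ S \ A r := Finset.mem_sdiff.2
          ⟨hxS, fun h => hxnA (Finset.mem_biUnion.2 ⟨r, Finset.mem_insert_self _ _, h⟩)⟩
        have : x ∈ Zr ∩ (S \ A r) := Finset.mem_inter.2 ⟨hxZr, hxSAr⟩
        rw [hZrdisj] at this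
        exact Finset.notMem_empty _ this
      · have hxS₁ : x ∈ S₁ \ rs'.biUnion A := by
          rw [hkey]
          exact Finset.mem_union_left _ hxfull
        have : x ∈ Z' ∩ (S₁ \ rs'.biUnion A) := Finset.mem_inter.2 ⟨hxZ', hxS₁⟩
        rw [hZ'disj] at this
        exact Finset.notMem_empty _ this

/-- **Lemma 4.9.** Let `R` be a subset of the union of the profit
classes such that for every class `r`, `R ∩ C_r(α)` is a minimum basis w.r.t. `c`
of the matroid `[(E, I) ∩ C_r(α)]_{≤ q(ε)}`. Then every `G ∈ I_{≤ q(ε)}` has a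
substitution contained in `R`. -/
theorem exists_substitution_in_min_bases (K : BMI E) (ε : ℝ)
    (hε : 0 < ε) (hε2 : ε < 1/2) (α : ℝ) (hα1 : K.opt / 2 ≤ α) (hα2 : α ≤ K.opt)
    (R : Finset E)
    (hRsub : R ⊆ (Finset.Icc 1 (numClasses ε)).biUnion (K.profitClass ε α))
    (hR : ∀ r ∈ Finset.Icc 1 (numClasses ε),
      IsMinBasisOf (K.classIndep ε α r) (K.profitClass ε α r) K.cost
        (R ∩ K.profitClass ε α r)) :
    ∀ G : Finset E, K.IndepLe ε G → ∃ Z ⊆ R, K.IsSubstitution ε α G Z := by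
  intro G hG
  obtain ⟨hGind, hGcard⟩ := hG
  classical
  set A : ℕ → Finset E := fun r => K.profitClass ε α r ∩ G ∩ K.H ε with hAdef
  have hAsub : ∀ r ∈ Finset.Icc 1 (numClasses ε),
      A r ⊆ G ∧ A r ⊆ K.profitClass ε α r := by
    intro r _
    constructor
    · intro x hx
      simp only [hAdef, Finset.mem_inter] at hx
      exact hx.1.2
    · intro x hx
      simp only [hAdef, Finset.mem_inter] at hx
      exact hx.1.1
  have hcover : (Finset.Icc 1 (numClasses ε)).biUnion A = G ∩ K.H ε := by
    ext x
    simp only [Finset.mem_biUnion, hAdef, Finset.mem_inter]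
    constructor
    · rintro ⟨r, hr, ⟨⟨_, h2⟩, h3⟩⟩
      exact ⟨h2, h3⟩
    · rintro ⟨hxG, hxH⟩
      obtain ⟨r, hr, hxC⟩ := mem_class_of_mem_H K hε hε2 hα1 hα2 hxH
      exact ⟨r, hr, ⟨hxC, hxG⟩, hxH⟩
  have hGH : G \ (Finset.Icc 1 (numClasses ε)).biUnion A = G \ K.H ε := by
    rw [hcover]
    ext x
    simp only [Finset.mem_sdiff, Finset.mem_inter]
    tauto
  obtain ⟨Z, hZR, hZC, hZind, hZcard, hZcost, hZcounts, hZdisj⟩ :=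
    multi_replace K hε hε2 hR A (Finset.Icc 1 (numClasses ε)) Finset.Subset.rfl
      G hGind hGcard hAsub
  rw [hGH] at hZind hZcard hZdisj
  rw [hcover] at hZcost
  refine ⟨Z, hZR, hZC, ⟨hZind, by rw [hZcard]; exact hGcard⟩, hZcost, ?_, ?_⟩
  · intro r hr
    have h1 := hZcounts r hr
    rw [Finset.inter_comm] at h1
    rw [h1, hAdef]
  · rw [Finset.inter_comm]
    exact hZdisj
end
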